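/- arXiv:1809.07736 — 7 statements merged into one kernel-verified Lean document; each statement's English description precedes it below -/
import Mathlib

section
/- There exists a constant c > 0 such that the following holds. If G, H, W, k, n satisfy Assumption (★) with constant c, then G contains no cycle of length ℓ with n−k ≤ ℓ ≤ n−1 that passes through all problematic vertices of G. -/
/-!
A cycle through all problematic vertices whose length `ℓ` satisfies `n - k ≤ ℓ ≤ n - 2` can be
lengthened by one vertex without losing any of its vertices. A vertex `v` off the cycle is not
problematic, so it has more than `2k` neighbours, and at most `k - 1` of them lie off the cycle.
The cyclic successors of `k` of its neighbours on the cycle, together with `v`, are `k + 1`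
vertices and so span an edge. Either `v` is adjacent to a neighbour `x` and its successor `x⁺`,
and `v` is inserted between them; or two successors `x⁺`, `y⁺` are adjacent, and the cycle
`x⁺ … y y⁺ … x` is rerouted to `y⁺ … x v y … x⁺`. Repeating this produces a cycle of length
`n - 1` through `W`, which (★) excludes.
-/

open Finset

/-- `σ` lists the vertices of `G` in the order of a Hamilton cycle `H`:
it is a bijection from `ZMod n` such that consecutive indices give adjacent vertices. -/
def IsHamOrder {V : Type} [Fintype V] (G : SimpleGraph V) (n : ℕ) (σ : ZMod n → V) : Prop :=
  Function.Bijective σ ∧ ∀ i : ZMod n, G.Adj (σ i) (σ (i + 1))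

/-- A vertex is problematic if it has degree at most `2k` or belongs to `W`. -/
def Problematic {V : Type} [Fintype V] [DecidableEq V] (G : SimpleGraph V)
    [DecidableRel G.Adj] (W : Finset V) (k : ℕ) (v : V) : Prop :=
  G.degree v ≤ 2 * k ∨ v ∈ W

/-- `G` has a cycle of length `ℓ` passing through all vertices of `S`. -/
def HasCycleThrough {V : Type} (G : SimpleGraph V) (ℓ : ℕ) (S : Set V) : Prop :=
  ∃ (u : V) (w : G.Walk u u), w.IsCycle ∧ w.length = ℓ ∧ ∀ x ∈ S, x ∈ w.support

/-- Assumption (★) with constant `c`: `G` is a graph on `n` vertices with Hamilton cycle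
(order) `σ`, independence number at most `k`, `W` has at most `20k²` vertices, `G` has no
cycle of length `n − 1` through all of `W`, and `n ≥ c·k^(11/5)`. -/
def StarAssumption {V : Type} [Fintype V] [DecidableEq V] (G : SimpleGraph V) [DecidableRel G.Adj]
    (n k : ℕ) (σ : ZMod n → V) (W : Finset V) (c : ℝ) : Prop :=
  Fintype.card V = n ∧ IsHamOrder G n σ ∧
  (∀ s : Finset V, (∀ u ∈ s, ∀ v ∈ s, u ≠ v → ¬ G.Adj u v) → s.card ≤ k) ∧
  W.card ≤ 20 * k ^ 2 ∧
  ¬ HasCycleThrough G (n - 1) (W : Set V) ∧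
  c * (k : ℝ) ^ ((11 : ℝ) / 5) ≤ (n : ℝ)

/-- Two vertices are consecutive if they are neighbours on the Hamilton cycle. -/
def Consec {V : Type} (n : ℕ) (σ : ZMod n → V) (u v : V) : Prop :=
  ∃ i : ZMod n, (σ i = u ∧ σ (i + 1) = v) ∨ (σ i = v ∧ σ (i + 1) = u)

/-- A continuous set of vertices: one forming a subpath (interval) of the Hamilton cycle. -/
def ContinuousSet {V : Type} [DecidableEq V] (n : ℕ) (σ : ZMod n → V) (S : Finset V) : Prop :=
  ∃ (i : ZMod n) (m : ℕ), S = (Finset.range m).image (fun j : ℕ => σ (i + (j : ZMod n)))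

/-- `B` is a continuous closure of `A`: a minimum-size continuous set containing `A`. -/
def IsClosure {V : Type} [DecidableEq V] (n : ℕ) (σ : ZMod n → V) (A B : Finset V) : Prop :=
  ContinuousSet n σ B ∧ A ⊆ B ∧
    ∀ B' : Finset V, ContinuousSet n σ B' → A ⊆ B' → B.card ≤ B'.card

/-- An arc-system: a family of arcs together with a choice of continuous closure for each
arc, such that closures of distinct arcs are disjoint, closures contain no problematic
vertex, and no arc contains two consecutive vertices. -/
structure ArcSystem {V : Type} [Fintype V] [DecidableEq V] (G : SimpleGraph V)
    [DecidableRel G.Adj] (n k : ℕ) (σ : ZMod n → V) (W : Finset V) where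
  arcs : Finset (Finset V)
  cl : Finset V → Finset V
  closure_spec : ∀ A ∈ arcs, IsClosure n σ A (cl A)
  closures_disjoint : ∀ A ∈ arcs, ∀ B ∈ arcs, A ≠ B → Disjoint (cl A) (cl B)
  no_problematic : ∀ A ∈ arcs, ∀ v ∈ cl A, ¬ Problematic G W k v
  no_consec : ∀ A ∈ arcs, ∀ u ∈ A, ∀ v ∈ A, u ≠ v → ¬ Consec n σ u v

namespace ArcSystem

variable {V : Type} [Fintype V] [DecidableEq V] {G : SimpleGraph V} [DecidableRel G.Adj]
  {n k : ℕ} {σ : ZMod n → V} {W : Finset V}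

/-- An arc-system is independent if every closure has at most `k` vertices. -/
def Independent (𝒜 : ArcSystem G n k σ W) : Prop :=
  ∀ A ∈ 𝒜.arcs, (𝒜.cl A).card ≤ k

/-- Every arc of the system has at least `l` vertices. -/
def LengthGe (𝒜 : ArcSystem G n k σ W) (l : ℕ) : Prop :=
  ∀ A ∈ 𝒜.arcs, l ≤ A.card

end ArcSystem

/-- A vertex set `s` is `M₂`-free (for `G`) if the subgraph induced by `s`
contains no two vertex-disjoint edges. -/
def M2Free {V : Type} (G : SimpleGraph V) (s : Finset V) : Prop :=
  ¬ ∃ a b x y : V, a ∈ s ∧ b ∈ s ∧ x ∈ s ∧ y ∈ s ∧ G.Adj a b ∧ G.Adj x y ∧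
      a ≠ x ∧ a ≠ y ∧ b ≠ x ∧ b ≠ y

namespace ArcSystem

variable {V : Type} [Fintype V] [DecidableEq V] {G : SimpleGraph V} [DecidableRel G.Adj]
  {n k : ℕ} {σ : ZMod n → V} {W : Finset V}

/-- An arc-system is simple if it is independent and any two distinct arcs induce an
`M₂`-free subgraph of `G`. -/
def Simple (𝒜 : ArcSystem G n k σ W) : Prop :=
  𝒜.Independent ∧ ∀ A ∈ 𝒜.arcs, ∀ B ∈ 𝒜.arcs, A ≠ B → M2Free G (A ∪ B)

end ArcSystem

/-- `G[𝒜]` contains an independent set of size at least `m`. -/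
def HasIndepInArcs {V : Type} [Fintype V] [DecidableEq V] (G : SimpleGraph V)
    [DecidableRel G.Adj] {n k : ℕ} {σ : ZMod n → V} {W : Finset V}
    (𝒜 : ArcSystem G n k σ W) (m : ℕ) : Prop :=
  ∃ I : Finset V, (∀ v ∈ I, ∃ A ∈ 𝒜.arcs, v ∈ A) ∧
    (∀ u ∈ I, ∀ v ∈ I, u ≠ v → ¬ G.Adj u v) ∧ m ≤ I.card

/-- The constants `a_p = 10·3^p`. -/
def aP (p : ℕ) : ℕ := 10 * 3 ^ p

/-- The constants `b_p = 1000^p·4^(p²)`. -/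
def bP (p : ℕ) : ℕ := 1000 ^ p * 4 ^ (p ^ 2)

namespace List

variable {α : Type*} [DecidableEq α] {l : List α} {x y : α}

theorem exists_isRotated_getLast?_head? (hl : l.Nodup) (hx : x ∈ l) :
    ∃ l', l ~r l' ∧ l'.getLast? = some x ∧ l'.head? = some (l.next x hx) := by
  obtain ⟨s, t, rfl⟩ := append_of_mem hx
  have hrot : s ++ x :: t ~r t ++ s ++ [x] := by
    simpa using isRotated_append (l := s ++ [x]) (l' := t)
  refine ⟨t ++ s ++ [x], hrot, by simp, ?_⟩
  have hne : t ++ s ++ [x] ≠ [] := by simp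
  rw [isRotated_next_eq hrot hl, head?_eq_some_head hne]
  simpa using (next_getLast_eq_head _ hne (hrot.nodup_iff.1 hl)).symm

theorem exists_eq_append_next (hx : l.getLast? = some x) (hy : y ∈ l) (hyx : y ≠ x) :
    ∃ s t, l = s ++ y :: l.next y hy :: t := by
  have hne : l ≠ [] := ne_nil_of_mem hy
  rw [getLast?_eq_some_getLast hne, Option.some_inj] at hx
  have hdrop : y ∈ l.dropLast := by
    rw [← dropLast_append_getLast hne, mem_append, mem_singleton, hx] at hy
    exact hy.resolve_right hyx
  obtain ⟨s, t, h⟩ := nextOr_infix_of_mem_dropLast hdrop (l.get ⟨0, length_pos_of_mem hy⟩)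
  exact ⟨s, t, by simpa [next] using h.symm⟩

end List

namespace Cycle

variable {α : Type*} {r : α → α → Prop} {l l₁ l₂ : List α} {a b x y v : α}

theorem chain_coe_iff :
    Chain r (l : Cycle α) ↔ l.IsChain r ∧ ∀ x ∈ l.getLast?, ∀ y ∈ l.head?, r x y := by
  rcases l with - | ⟨a, t⟩
  · simp
  · rw [chain_ne_nil r (List.cons_ne_nil a t), List.isChain_cons]
    simp [List.getLast?_eq_some_getLast (List.cons_ne_nil a t), and_comm]

theorem Chain.append_singleton (h : Chain r (l : Cycle α)) (hx : l.getLast? = some x)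
    (hb : l.head? = some b) (hxv : r x v) (hvb : r v b) :
    Chain r ((l ++ [v] : List α) : Cycle α) := by
  rw [chain_coe_iff] at h ⊢
  refine ⟨h.1.append (.singleton v) (by simp_all), ?_⟩
  rcases l with - | ⟨a, t⟩ <;> simp_all [List.getLast?_cons]

theorem Chain.reroute [Std.Symm r] (h : Chain r ((l₁ ++ l₂ : List α) : Cycle α))
    (ha : l₁.head? = some a) (hy : l₁.getLast? = some y)
    (hb : l₂.head? = some b) (hx : l₂.getLast? = some x)
    (hab : r a b) (hxv : r x v) (hvy : r v y) :
    Chain r ((l₂ ++ v :: l₁.reverse : List α) : Cycle α) := by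
  rw [chain_coe_iff] at h ⊢
  obtain ⟨h₁, h₂, -⟩ := List.isChain_append.1 h.1
  have h₁' : l₁.reverse.IsChain r :=
    List.isChain_reverse.2 (h₁.imp fun _ _ h => Std.Symm.symm _ _ h)
  refine ⟨h₂.append (h₁'.cons (by simp_all)) (by simp_all), ?_⟩
  rcases l₂ with - | ⟨b', t⟩ <;> simp_all [List.getLast?_cons]

end Cycle

namespace SimpleGraph

variable {V : Type*} {G : SimpleGraph V} {l l' : List V} {v x y : V}

-- Cycles are handled as vertex lists read cyclically, so that rotating and splicing them are
-- list operations; `hasCycleThrough_iff_exists_isCycleList` translates back to walks.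
def IsCycleList (G : SimpleGraph V) (l : List V) : Prop :=
  3 ≤ l.length ∧ l.Nodup ∧ Cycle.Chain G.Adj (l : Cycle V)

theorem IsCycleList.isRotated (h : G.IsCycleList l) (hr : l ~r l') : G.IsCycleList l' :=
  ⟨hr.perm.length_eq ▸ h.1, hr.nodup_iff.1 h.2.1, Cycle.coe_eq_coe.2 hr ▸ h.2.2⟩

theorem IsCycleList.of_perm_cons (h : G.IsCycleList l) (hv : v ∉ l) (hp : l'.Perm (v :: l))
    (hc : Cycle.Chain G.Adj (l' : Cycle V)) : G.IsCycleList l' := by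
  refine ⟨?_, hp.nodup_iff.2 (List.nodup_cons.2 ⟨hv, h.2.1⟩), hc⟩
  rw [hp.length_eq, List.length_cons]
  exact h.1.trans (Nat.le_succ _)

theorem Walk.IsCycle.isCycleList_support_tail {u : V} {c : G.Walk u u} (hc : c.IsCycle) :
    G.IsCycleList c.support.tail := by
  refine ⟨by simpa using hc.three_le_length, hc.support_nodup, ?_⟩
  have hne : c.support.tail ≠ [] := List.ne_nil_of_mem (c.end_mem_tail_support hc.not_nil)
  have hlast : c.support.tail.getLast hne = u := by
    rw [List.getLast_tail, Walk.getLast_support]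
  rw [Cycle.chain_ne_nil _ hne, hlast, c.cons_tail_support]
  exact c.isChain_adj_support

theorem IsCycleList.exists_isCycle (h : G.IsCycleList l) :
    ∃ (u : V) (c : G.Walk u u), c.IsCycle ∧ c.support.tail = l := by
  obtain ⟨hlen, hnodup, hchain⟩ := h
  have hne : l ≠ [] := List.ne_nil_of_length_pos (by omega)
  rw [Cycle.chain_ne_nil _ hne] at hchain
  set c : G.Walk (l.getLast hne) (l.getLast hne) :=
    (Walk.ofSupport _ (List.cons_ne_nil _ l) hchain).copy (List.head_cons ..)
      (List.getLast_cons hne) with hc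
  have hsupp : c.support = l.getLast hne :: l := by
    rw [hc, Walk.support_copy, Walk.support_ofSupport]
  have hlength : c.length = l.length := by
    rw [hc, Walk.length_copy, Walk.length_ofSupport, List.length_cons, Nat.add_sub_cancel]
  have hnil : ¬ c.Nil := by
    rw [← Walk.length_eq_zero_iff, hlength]
    omega
  refine ⟨_, c, ?_, by simp [hsupp]⟩
  rw [Walk.isCycle_iff_isPath_tail_and_le_length, Walk.isPath_def,
    c.support_tail_of_not_nil hnil, hsupp, hlength]
  exact ⟨hnodup, hlen⟩

section Extension

variable [DecidableEq V]

theorem IsCycleList.exists_perm_cons_of_adj_next (h : G.IsCycleList l) (hv : v ∉ l)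
    (hx : x ∈ l) (hvx : G.Adj v x) (hvx' : G.Adj v (l.next x hx)) :
    ∃ l', G.IsCycleList l' ∧ l'.Perm (v :: l) := by
  obtain ⟨l₀, hrot, hlast, hhead⟩ := List.exists_isRotated_getLast?_head? h.2.1 hx
  have hp : (l₀ ++ [v]).Perm (v :: l) :=
    (List.perm_append_singleton v l₀).trans (hrot.perm.symm.cons v)
  exact ⟨_, h.of_perm_cons hv hp
    ((h.isRotated hrot).2.2.append_singleton hlast hhead hvx.symm hvx'), hp⟩

theorem IsCycleList.exists_perm_cons_of_next_adj_next (h : G.IsCycleList l) (hv : v ∉ l)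
    (hx : x ∈ l) (hy : y ∈ l) (hxy : x ≠ y) (hvx : G.Adj v x) (hvy : G.Adj v y)
    (hnext : G.Adj (l.next x hx) (l.next y hy)) :
    ∃ l', G.IsCycleList l' ∧ l'.Perm (v :: l) := by
  obtain ⟨l₀, hrot, hlast, hhead⟩ := List.exists_isRotated_getLast?_head? h.2.1 hx
  obtain ⟨s, t, hst⟩ := List.exists_eq_append_next hlast (hrot.mem_iff.1 hy) hxy.symm
  rw [← List.isRotated_next_eq hrot h.2.1 hy] at hst
  -- `l₀ = s ++ y :: y⁺ :: t` runs along the cycle from `x⁺` to `x`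
  subst hst
  set y' := l.next y hy
  have hp : (y' :: t ++ v :: (s ++ [y]).reverse).Perm (v :: l) := by
    have := List.perm_middle.trans <| (List.perm_append_comm.trans <|
      (List.reverse_perm (s ++ [y])).append_right (y' :: t)).cons v
    simp only [List.append_assoc, List.singleton_append] at this
    exact this.trans (hrot.perm.symm.cons v)
  have h₀ : Cycle.Chain G.Adj ((s ++ [y] ++ y' :: t : List V) : Cycle V) := by
    simpa using (h.isRotated hrot).2.2
  have : Std.Symm G.Adj := G.symm
  refine ⟨_, h.of_perm_cons hv hp
    (h₀.reroute (a := l.next x hx) ?_ ?_ ?_ ?_ hnext hvx.symm hvy), hp⟩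
  · cases s <;> simp_all
  · simp
  · simp
  · simp_all [List.getLast?_cons]

variable [DecidableRel G.Adj] {k : ℕ}

theorem exists_adj_next_or_next_adj_next (hα : ∀ s : Finset V, G.IsIndepSet s → #s ≤ k)
    (hl : l.Nodup) (hv : v ∉ l) (hN : k ≤ #(l.toFinset.filter (G.Adj v))) :
    (∃ x hx, G.Adj v x ∧ G.Adj v (l.next x hx)) ∨
      ∃ x hx y hy, x ≠ y ∧ G.Adj v x ∧ G.Adj v y ∧ G.Adj (l.next x hx) (l.next y hy) := by
  set N := l.toFinset.filter (G.Adj v)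
  have hmem : ∀ x ∈ N, x ∈ l ∧ G.Adj v x := by simp [N]
  let succ : N → V := fun x => l.next x.1 (hmem x.1 x.2).1
  have hsucc : Function.Injective succ := by
    intro a b hab
    apply Subtype.ext
    rw [← List.prev_next l hl a.1 (hmem a.1 a.2).1, ← List.prev_next l hl b.1 (hmem b.1 b.2).1]
    simp only [succ] at hab
    simp only [hab]
  have hvT : v ∉ N.attach.image succ := by
    simp only [mem_image, not_exists, not_and]
    exact fun x _ hx => hv (hx ▸ List.next_mem ..)
  have hT : ¬ G.IsIndepSet (insert v (N.attach.image succ) : Finset V) := by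
    intro hT
    have := hα _ hT
    rw [card_insert_of_notMem hvT, card_image_of_injective _ hsucc, card_attach] at this
    omega
  simp only [IsIndepSet, Set.Pairwise, coe_insert, Set.mem_insert_iff, coe_image,
    Set.mem_image, mem_coe, mem_attach, true_and, not_forall, not_not] at hT
  obtain ⟨a, ha, b, hb, hab, hadj⟩ := hT
  rcases ha with rfl | ⟨x, rfl⟩ <;> rcases hb with rfl | ⟨y, rfl⟩
  · exact absurd rfl hab
  · exact .inl ⟨y.1, _, (hmem y.1 y.2).2, hadj⟩
  · exact .inl ⟨x.1, _, (hmem x.1 x.2).2, hadj.symm⟩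
  · exact .inr ⟨x.1, _, y.1, _, fun h => hab (congrArg succ (Subtype.ext h)),
      (hmem x.1 x.2).2, (hmem y.1 y.2).2, hadj⟩

theorem IsCycleList.exists_perm_cons (hα : ∀ s : Finset V, G.IsIndepSet s → #s ≤ k)
    (h : G.IsCycleList l) (hv : v ∉ l) (hN : k ≤ #(l.toFinset.filter (G.Adj v))) :
    ∃ l', G.IsCycleList l' ∧ l'.Perm (v :: l) := by
  rcases exists_adj_next_or_next_adj_next hα h.2.1 hv hN with
    ⟨x, hx, hvx, hvx'⟩ | ⟨x, hx, y, hy, hxy, hvx, hvy, hnext⟩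
  · exact h.exists_perm_cons_of_adj_next hv hx hvx hvx'
  · exact h.exists_perm_cons_of_next_adj_next hv hx hy hxy hvx hvy hnext

variable [Fintype V]

theorem degree_add_length_le (hl : l.Nodup) (hv : v ∉ l) :
    G.degree v + l.length + 1 ≤ Fintype.card V + #(l.toFinset.filter (G.Adj v)) := by
  have hsub : G.neighborFinset v ⊆ l.toFinset.filter (G.Adj v) ∪ (insert v l.toFinset)ᶜ := by
    intro x hx
    rw [mem_neighborFinset] at hx
    by_cases hxl : x ∈ l <;> simp [hx, hxl, hx.ne.symm]
  have hcompl : #(insert v l.toFinset)ᶜ + (l.length + 1) = Fintype.card V := by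
    rw [← List.toFinset_card_of_nodup hl, ← card_insert_of_notMem (by simpa using hv),
      card_compl_add_card]
  calc G.degree v + l.length + 1
      ≤ #(l.toFinset.filter (G.Adj v) ∪ (insert v l.toFinset)ᶜ) + (l.length + 1) := by
        rw [← card_neighborFinset_eq_degree]; have := card_le_card hsub; omega
    _ ≤ Fintype.card V + #(l.toFinset.filter (G.Adj v)) := by
        have := card_union_le (l.toFinset.filter (G.Adj v)) (insert v l.toFinset)ᶜ; omega

theorem IsCycleList.exists_length_succ (hα : ∀ s : Finset V, G.IsIndepSet s → #s ≤ k)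
    (h : G.IsCycleList l) (hlt : l.length < Fintype.card V)
    (hlong : Fintype.card V ≤ l.length + k) (hdeg : ∀ v ∉ l, 2 * k < G.degree v) :
    ∃ l', G.IsCycleList l' ∧ l'.length = l.length + 1 ∧ l ⊆ l' := by
  obtain ⟨v, hv⟩ : ∃ v, v ∉ l := by
    by_contra! hall
    have : Fintype.card V ≤ l.length := by
      rw [← card_univ]
      exact (card_le_card fun x _ => List.mem_toFinset.2 (hall x)).trans
        (List.toFinset_card_le l)
    omega
  have := degree_add_length_le (G := G) h.2.1 hv
  have := hdeg v hv
  obtain ⟨l', hl', hp⟩ := h.exists_perm_cons hα hv (by omega)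
  exact ⟨l', hl', by simp [hp.length_eq], fun x hx => hp.mem_iff.2 (List.mem_cons_of_mem v hx)⟩

theorem IsCycleList.exists_length_eq (hα : ∀ s : Finset V, G.IsIndepSet s → #s ≤ k)
    (h : G.IsCycleList l) (hlong : Fintype.card V ≤ l.length + k)
    (hdeg : ∀ v ∉ l, 2 * k < G.degree v) {m : ℕ} (hlm : l.length ≤ m)
    (hm : m < Fintype.card V) :
    ∃ l', G.IsCycleList l' ∧ l'.length = m ∧ l ⊆ l' := by
  induction m, hlm using Nat.le_induction with
  | base => exact ⟨l, h, rfl, List.Subset.refl l⟩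
  | succ m hlm ih =>
    obtain ⟨l', hl', hlen, hsub⟩ := ih (by omega)
    obtain ⟨l'', hl'', hlen', hsub'⟩ :=
      hl'.exists_length_succ hα (by omega) (by omega) fun v hv => hdeg v fun hvl => hv (hsub hvl)
    exact ⟨l'', hl'', by omega, List.Subset.trans hsub hsub'⟩

end Extension

end SimpleGraph

open SimpleGraph in
theorem hasCycleThrough_iff_exists_isCycleList {V : Type} {G : SimpleGraph V} {ℓ : ℕ}
    {S : Set V} :
    HasCycleThrough G ℓ S ↔ ∃ l, G.IsCycleList l ∧ l.length = ℓ ∧ ∀ x ∈ S, x ∈ l := by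
  constructor
  · rintro ⟨u, c, hc, rfl, hS⟩
    refine ⟨_, hc.isCycleList_support_tail, by simp, fun x hx => ?_⟩
    rcases (c.mem_support_iff).1 (hS x hx) with rfl | hx
    · exact c.end_mem_tail_support hc.not_nil
    · exact hx
  · rintro ⟨l, hl, rfl, hS⟩
    obtain ⟨u, c, hc, rfl⟩ := hl.exists_isCycle
    exact ⟨u, c, hc, by simp, fun x hx => List.mem_of_mem_tail (hS x hx)⟩

/-- There is a constant `c > 0` such that under Assumption (★) with
constant `c`, `G` contains no cycle of length `ℓ` with `n − k ≤ ℓ ≤ n − 1` passing through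
all problematic vertices. -/
theorem statement3 :
    ∃ c : ℝ, 0 < c ∧
      ∀ (V : Type) [Fintype V] [DecidableEq V] (G : SimpleGraph V) [DecidableRel G.Adj]
        (n k : ℕ) (σ : ZMod n → V) (W : Finset V),
        StarAssumption G n k σ W c →
        ∀ ℓ : ℕ, n - k ≤ ℓ → ℓ ≤ n - 1 →
          ¬ HasCycleThrough G ℓ {v : V | Problematic G W k v} := by
  refine ⟨1, one_pos, ?_⟩
  rintro V _ _ G _ n k σ W ⟨rfl, -, hα, -, hW, -⟩ ℓ hkℓ hℓn hcyc
  obtain ⟨l, hl, rfl, hprob⟩ := hasCycleThrough_iff_exists_isCycleList.1 hcyc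
  have hdeg : ∀ v ∉ l, 2 * k < G.degree v := fun v hv => by
    by_contra! hv'
    exact hv (hprob v (.inl hv'))
  obtain ⟨l', hl', hlen, hsub⟩ :=
    hl.exists_length_eq hα (by omega) hdeg hℓn (by have := hl.1; omega)
  exact hW (hasCycleThrough_iff_exists_isCycleList.2
    ⟨l', hl', hlen, fun x hx => hsub (hprob x (.inr hx))⟩)
end

section
/- There exists a constant c > 0 such that the following holds. Suppose G, H, W, k, n satisfy Assumption (★) with constant c. Let A be a set of vertices of G such that no two vertices of A are consecutive, the continuous closure Ā of A contains no problematic vertex, and |Ā| ≤ k+2. Then A is an independent set in G. -/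
/-!
Suppose two vertices `u = σ a` and `v = σ (a + d)` of `A` were adjacent. As `A` has no
consecutive vertices and `|Ā| ≤ k + 2`, we have `2 ≤ d ≤ k + 1`, and the chord `uv` together with
the long arc of `H` from `v` back to `u` is a cycle missing exactly the `d - 1` vertices strictly
between `u` and `v`. These are not problematic, so each of `σ (a + 2), …, σ (a + d - 1)` has more
than `2k` neighbours, at least `k + 1` of them on the current cycle, and since `α(G) ≤ k` it can be
inserted into that cycle. This yields a cycle of length `n - 1` missing only `σ (a + 1) ∉ W`,
which (★) forbids.
-/

open Finset

namespace SimpleGraph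

variable {V : Type} {G : SimpleGraph V}

namespace Walk

def ofSeq (f : ℕ → V) (hf : ∀ j, G.Adj (f j) (f (j + 1))) : (l : ℕ) → G.Walk (f 0) (f l)
  | 0 => nil
  | l + 1 => (ofSeq f hf l).concat (hf l)

@[simp] theorem length_ofSeq (f : ℕ → V) (hf : ∀ j, G.Adj (f j) (f (j + 1))) (l : ℕ) :
    (ofSeq f hf l).length = l := by
  induction l with
  | zero => rfl
  | succ l ih => simp [ofSeq, ih]

theorem support_ofSeq (f : ℕ → V) (hf : ∀ j, G.Adj (f j) (f (j + 1))) (l : ℕ) :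
    (ofSeq f hf l).support = (List.range (l + 1)).map f := by
  induction l with
  | zero => rfl
  | succ l ih => rw [ofSeq, support_concat, ih, List.range_succ (n := l + 1)]; simp

theorem IsPath.isCycle_cons_cons {s t z : V} {P : G.Walk s t} (hP : P.IsPath) (hst : s ≠ t)
    (hz : z ∉ P.support) (h₁ : G.Adj t z) (h₂ : G.Adj z s) :
    (cons h₁ (cons h₂ P)).IsCycle := by
  rw [cons_isCycle_iff]
  refine ⟨hP.cons hz, ?_⟩
  rw [edges_cons, List.mem_cons]
  rintro (he | he)
  · obtain ⟨rfl, -⟩ | ⟨rfl, -⟩ := Sym2.eq_iff.mp he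
    exacts [G.irrefl h₁, hst rfl]
  · exact hz (snd_mem_support_of_mem_edges P he)

theorem support_reverse_append_cons_perm {a b c d : V} (w₁ : G.Walk a b) (w₃ : G.Walk c d)
    (h : G.Adj b c) (h' : G.Adj a c) :
    (w₁.reverse.append (cons h' w₃)).support.Perm (w₁.append (cons h w₃)).support := by
  simp only [support_append, support_reverse, support_cons, List.tail_cons]
  exact (List.reverse_perm _).append_right _

theorem IsCycle.dart_eq_of_snd_eq {u : V} {c : G.Walk u u} (hc : c.IsCycle) {d d' : G.Dart}
    (hd : d ∈ c.darts) (hd' : d' ∈ c.darts) (h : d.snd = d'.snd) : d = d' :=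
  List.inj_on_of_nodup_map (by rw [map_snd_darts]; exact hc.support_nodup) hd hd' h

theorem IsCycle.dart_eq_of_fst_eq {u : V} {c : G.Walk u u} (hc : c.IsCycle) {d d' : G.Dart}
    (hd : d ∈ c.darts) (hd' : d' ∈ c.darts) (h : d.fst = d'.fst) : d = d' :=
  List.inj_on_of_nodup_map (by rw [map_fst_darts]; exact hc.nodup_dropLast_support) hd hd' h

variable [DecidableEq V]

theorem IsCycle.exists_mem_darts_of_mem_support {u : V} {c : G.Walk u u} (hc : c.IsCycle) {p : V}
    (hp : p ∈ c.support) : ∃ s, ∃ h : G.Adj p s, ⟨(p, s), h⟩ ∈ c.darts := by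
  obtain ⟨s, h, q, hq⟩ := not_nil_iff.mp (hc.rotate hp).not_nil
  exact ⟨s, h, (rotate_darts c p hp).perm.subset (hq ▸ List.mem_cons_self)⟩

theorem IsCycle.exists_isPath_of_mem_darts {u : V} {c : G.Walk u u}
    (hc : c.IsCycle) {p s : V} {h : G.Adj p s} (he : ⟨(p, s), h⟩ ∈ c.darts) :
    ∃ q : G.Walk s p, q.IsPath ∧ q.length + 1 = c.length ∧
      q.support.toFinset = c.support.toFinset ∧ q.darts ⊆ c.darts := by
  have hfst : p ∈ c.support := c.dart_fst_mem_support_of_mem_darts he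
  have hrot := hc.rotate hfst
  obtain ⟨s', h', q, hq⟩ := not_nil_iff.mp hrot.not_nil
  have hdarts : (cons h' q).darts ⊆ c.darts := hq ▸ (rotate_darts c _ hfst).perm.subset
  obtain rfl : s' = s :=
    congrArg (·.snd) (hc.dart_eq_of_fst_eq (hdarts List.mem_cons_self) he rfl)
  refine ⟨q, (cons_isCycle_iff q h').mp (hq ▸ hrot) |>.1, ?_, ?_, ?_⟩
  · simpa [hq] using length_rotate c _ hfst
  · ext x
    rw [List.mem_toFinset, List.mem_toFinset, ← mem_support_rotate_iff c _ hfst, hq,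
      support_cons, List.mem_cons]
    exact ⟨Or.inr, by rintro (rfl | hx); exacts [q.end_mem_support, hx]⟩
  · exact fun d hd => hdarts (List.mem_cons_of_mem _ hd)

theorem IsCycle.exists_darts_adj_snd {k : ℕ} (hα : ∀ s : Finset V, G.IsIndepSet s → #s ≤ k)
    {u : V} {c : G.Walk u u} (hc : c.IsCycle) {N : Finset V} (hN : ∀ p ∈ N, p ∈ c.support)
    (hcard : k + 1 ≤ #N) :
    ∃ x ∈ N, ∃ y ∈ N, x ≠ y ∧ ∃ (x' y' : V) (hx : G.Adj x x') (hy : G.Adj y y'),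
      ⟨(x, x'), hx⟩ ∈ c.darts ∧ ⟨(y, y'), hy⟩ ∈ c.darts ∧ G.Adj x' y' := by
  choose! nxt hnxt_adj hnxt using fun p (hp : p ∈ c.support) =>
    hc.exists_mem_darts_of_mem_support hp
  have hinj : Set.InjOn nxt N := fun p hp p' hp' h =>
    congrArg (·.fst) (hc.dart_eq_of_snd_eq (hnxt p (hN p hp)) (hnxt p' (hN p' hp')) h)
  have hdep : ¬ G.IsIndepSet (N.image nxt : Set V) := fun hind => by
    have := hα _ hind
    rw [card_image_of_injOn hinj] at this
    omega
  obtain ⟨_, hx', _, hy', hne, hadj⟩ :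
      ∃ a ∈ N.image nxt, ∃ b ∈ N.image nxt, a ≠ b ∧ G.Adj a b := by
    simpa [IsIndepSet, Set.Pairwise] using hdep
  obtain ⟨x, hx, rfl⟩ := mem_image.mp hx'
  obtain ⟨y, hy, rfl⟩ := mem_image.mp hy'
  exact ⟨x, hx, y, hy, by rintro rfl; exact hne rfl, _, _, hnxt_adj x (hN x hx),
    hnxt_adj y (hN y hy), hnxt x (hN x hx), hnxt y (hN y hy), hadj⟩

variable [Fintype V] [DecidableRel G.Adj]

/-- The successors on `c` of the `k + 1` neighbours of `z` span an edge `x⁺y⁺`; then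
`x z y ⋯ x⁺ y⁺ ⋯ x`, with the stretch from `x⁺` to `y` reversed, is the new cycle. -/
theorem IsCycle.exists_isCycle_insert {k : ℕ} (hα : ∀ s : Finset V, G.IsIndepSet s → #s ≤ k)
    {u z : V} {c : G.Walk u u} (hc : c.IsCycle) (hz : z ∉ c.support)
    (hN : k + 1 ≤ #(G.neighborFinset z ∩ c.support.toFinset)) :
    ∃ (u' : V) (c' : G.Walk u' u'), c'.IsCycle ∧ c'.length = c.length + 1 ∧
      c'.support.toFinset = insert z c.support.toFinset := by
  obtain ⟨x, hx, y, hy, hxy, x', y', hxx', hyy', hdx, hdy, hadj⟩ :=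
    hc.exists_darts_adj_snd hα (fun p hp => by simpa using (mem_inter.mp hp).2) hN
  simp only [mem_inter, mem_neighborFinset, List.mem_toFinset] at hx hy
  obtain ⟨q, hq, hq_len, hq_supp, hq_darts⟩ := hc.exists_isPath_of_mem_darts hdx
  have hyq : y ∈ q.support := by
    rw [← List.mem_toFinset, hq_supp, List.mem_toFinset]; exact hy.2
  obtain ⟨s₂, h₂, w₃, hw⟩ := not_nil_iff.mp (q.dropUntil y hyq |>.not_nil_of_ne hxy.symm)
  obtain rfl : s₂ = y' := by
    have hd : ⟨(y, s₂), h₂⟩ ∈ c.darts :=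
      hq_darts (q.darts_dropUntil_subset_darts hyq (hw ▸ List.mem_cons_self))
    exact congrArg (·.snd) (hc.dart_eq_of_fst_eq hd hdy rfl)
  have hsplit : q = (q.takeUntil y hyq).append (cons h₂ w₃) := by rw [← hw, take_spec]
  set P := (q.takeUntil y hyq).reverse.append (cons hadj w₃)
  have hperm : P.support.Perm q.support :=
    hsplit ▸ support_reverse_append_cons_perm _ _ h₂ hadj
  have hP_supp : P.support.toFinset = c.support.toFinset :=
    hq_supp ▸ List.toFinset_eq_of_perm _ _ hperm
  have hzP : z ∉ P.support := by
    rwa [← List.mem_toFinset, hP_supp, List.mem_toFinset]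
  refine ⟨x, cons hx.1.symm (cons hy.1 P),
    ((isPath_def _).mpr (hperm.nodup_iff.mpr hq.support_nodup)).isCycle_cons_cons hxy.symm hzP _ _,
    ?_, ?_⟩
  · have := hperm.length_eq
    simp only [length_support] at this
    simp only [length_cons]
    omega
  · rw [support_cons, support_cons, List.toFinset_cons, List.toFinset_cons, hP_supp,
      insert_eq_of_mem (mem_insert_of_mem (List.mem_toFinset.mpr hx.2))]

theorem IsCycle.exists_isCycle_insert_finset {k : ℕ}
    (hα : ∀ s : Finset V, G.IsIndepSet s → #s ≤ k) (S : Finset V) :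
    ∀ {u : V} {c : G.Walk u u}, c.IsCycle → Disjoint S c.support.toFinset →
      (∀ z ∈ S, k + 1 ≤ #(G.neighborFinset z ∩ c.support.toFinset)) →
      ∃ (u' : V) (c' : G.Walk u' u'), c'.IsCycle ∧ c'.length = c.length + #S ∧
        c'.support.toFinset = S ∪ c.support.toFinset := by
  induction S using Finset.induction_on with
  | empty => exact fun {u c} hc _ _ => ⟨u, c, hc, rfl, by simp⟩
  | insert z S hzS ih =>
    intro u c hc hdisj hdeg
    rw [disjoint_insert_left, List.mem_toFinset] at hdisj
    obtain ⟨u₁, c₁, hc₁, hlen₁, hsupp₁⟩ :=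
      hc.exists_isCycle_insert hα hdisj.1 (hdeg z (mem_insert_self z S))
    have hdisj₁ : Disjoint S c₁.support.toFinset := by
      rw [hsupp₁, disjoint_insert_right]; exact ⟨hzS, hdisj.2⟩
    have hdeg₁ : ∀ x ∈ S, k + 1 ≤ #(G.neighborFinset x ∩ c₁.support.toFinset) := fun x hx =>
      (hdeg x (mem_insert_of_mem hx)).trans
        (card_le_card (inter_subset_inter_left (hsupp₁ ▸ subset_insert _ _)))
    obtain ⟨u', c', hc', hlen', hsupp'⟩ := ih hc₁ hdisj₁ hdeg₁
    refine ⟨u', c', hc', ?_, ?_⟩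
    · rw [hlen', hlen₁, card_insert_of_notMem hzS]; ring
    · rw [hsupp', hsupp₁, insert_union, union_insert]

end Walk

variable [DecidableEq V]

theorem exists_isCycle_of_chord {τ : ℕ → V} {n d : ℕ}
    (hτ : ∀ j, G.Adj (τ j) (τ (j + 1))) (hinj : Set.InjOn τ (Set.Iio n)) (hper : τ n = τ 0)
    (hd : 2 ≤ d) (hdn : d + 2 ≤ n) (hchord : G.Adj (τ 0) (τ d)) :
    ∃ (u : V) (c : G.Walk u u), c.IsCycle ∧ c.length = n - d + 1 ∧
      c.support.toFinset = insert (τ 0) ((Ico d n).image τ) := by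
  have hτinj : ∀ {i j}, i < n → j < n → τ i = τ j → i = j := fun hi hj h => hinj hi hj h
  set P := Walk.ofSeq (fun j => τ (d + j)) (fun j => hτ (d + j)) (n - d - 1)
  have hP_supp : P.support = (List.range (n - d)).map fun j => τ (d + j) := by
    rw [Walk.support_ofSeq, show n - d - 1 + 1 = n - d by omega]
  have hP : P.IsPath := by
    rw [Walk.isPath_def, hP_supp]
    refine List.nodup_range.map_on fun i hi j hj h => ?_
    simp only [List.mem_range] at hi hj
    have := hτinj (by omega) (by omega) h
    omega
  have hend : G.Adj (τ (d + (n - d - 1))) (τ 0) := by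
    have := hτ (n - 1)
    rwa [show n - 1 + 1 = n by omega, hper, show n - 1 = d + (n - d - 1) by omega] at this
  have hst : τ (d + 0) ≠ τ (d + (n - d - 1)) := fun h => by
    have := hτinj (by omega) (by omega) h
    omega
  have hz : τ 0 ∉ P.support := by
    simp only [hP_supp, List.mem_map, List.mem_range, not_exists, not_and]
    intro j hj h
    have := hτinj (by omega) (by omega) h
    omega
  refine ⟨_, .cons hend (.cons hchord P), hP.isCycle_cons_cons hst hz _ _, ?_, ?_⟩
  · simp only [Walk.length_cons, P, Walk.length_ofSeq]
    omega
  · ext x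
    simp only [Walk.support_cons, hP_supp, List.toFinset_cons, mem_insert, List.mem_toFinset,
      List.mem_map, List.mem_range, mem_image, mem_Ico]
    constructor
    · rintro (rfl | rfl | ⟨j, hj, rfl⟩)
      · exact Or.inr ⟨d + (n - d - 1), by omega, rfl⟩
      · exact Or.inl rfl
      · exact Or.inr ⟨d + j, by omega, rfl⟩
    · rintro (rfl | ⟨t, ht, rfl⟩)
      · exact Or.inr (Or.inl rfl)
      · exact Or.inr (Or.inr ⟨t - d, by omega, by rw [Nat.add_sub_cancel' ht.1]⟩)

variable [Fintype V] [DecidableRel G.Adj]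

theorem degree_le_card_neighborFinset_inter_add_card {C S : Finset V} {ω z : V}
    (hcover : ∀ x, x ∈ C ∨ x ∈ S ∨ x = ω) (hz : z ∈ S) :
    G.degree z ≤ #(G.neighborFinset z ∩ C) + #S := by
  have hsub : G.neighborFinset z ⊆ (G.neighborFinset z ∩ C) ∪ insert ω (S.erase z) := by
    intro x hx
    rcases hcover x with h | h | rfl
    · exact mem_union_left _ (mem_inter.mpr ⟨hx, h⟩)
    · exact mem_union_right _ (mem_insert_of_mem (mem_erase.mpr ⟨(G.ne_of_adj
        ((mem_neighborFinset G z x).mp hx)).symm, h⟩))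
    · exact mem_union_right _ (mem_insert_self _ _)
  calc G.degree z = #(G.neighborFinset z) := (card_neighborFinset_eq_degree G z).symm
    _ ≤ #(G.neighborFinset z ∩ C) + #(insert ω (S.erase z)) :=
      (card_le_card hsub).trans (card_union_le _ _)
    _ ≤ #(G.neighborFinset z ∩ C) + #S := by
      grw [card_insert_le, card_erase_add_one hz]

theorem exists_isCycle_of_chord_of_degree {k : ℕ}
    (hα : ∀ s : Finset V, G.IsIndepSet s → #s ≤ k) {τ : ℕ → V} {n d : ℕ}
    (hτ : ∀ j, G.Adj (τ j) (τ (j + 1))) (hinj : Set.InjOn τ (Set.Iio n)) (hper : τ n = τ 0)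
    (hsurj : ∀ x, ∃ j < n, τ j = x) (hd : 2 ≤ d) (hdk : d ≤ k + 1) (hdn : d + 2 ≤ n)
    (hchord : G.Adj (τ 0) (τ d)) (hdeg : ∀ j ∈ Ico 2 d, 2 * k + 1 ≤ G.degree (τ j)) :
    ∃ (u : V) (c : G.Walk u u), c.IsCycle ∧ c.length = n - 1 ∧ ∀ x, x ≠ τ 1 → x ∈ c.support := by
  have hτinj : ∀ {i j}, i < n → j < n → τ i = τ j → i = j := fun hi hj h => hinj hi hj h
  obtain ⟨u₀, c₀, hc₀, hlen₀, hsupp₀⟩ := exists_isCycle_of_chord hτ hinj hper hd hdn hchord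
  set S := (Ico 2 d).image τ
  have hS : #S = d - 2 := by
    have hsub : (Ico 2 d : Set ℕ) ⊆ Set.Iio n := fun j hj => by
      simp only [coe_Ico, Set.mem_Ico, Set.mem_Iio] at hj ⊢; omega
    rw [card_image_of_injOn (hinj.mono hsub), Nat.card_Ico]
  have hcover : ∀ x, x ∈ c₀.support.toFinset ∨ x ∈ S ∨ x = τ 1 := by
    intro x
    obtain ⟨j, hj, rfl⟩ := hsurj x
    rw [hsupp₀]
    rcases (by omega : j = 0 ∨ j = 1 ∨ (2 ≤ j ∧ j < d) ∨ d ≤ j) with rfl | rfl | h | h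
    · exact Or.inl (mem_insert_self _ _)
    · exact Or.inr (Or.inr rfl)
    · exact Or.inr (Or.inl (mem_image_of_mem τ (mem_Ico.mpr h)))
    · exact Or.inl (mem_insert_of_mem (mem_image_of_mem τ (mem_Ico.mpr ⟨h, hj⟩)))
  have hdisj : Disjoint S c₀.support.toFinset := by
    rw [hsupp₀, disjoint_insert_right]
    refine ⟨?_, Finset.disjoint_left.mpr ?_⟩ <;>
      simp only [S, mem_image, mem_Ico, not_exists, not_and]
    · intro j hj h
      have := hτinj (by omega) (by omega) h
      omega
    · rintro _ ⟨j, hj, rfl⟩ t ht h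
      have := hτinj (by omega) (by omega) h
      omega
  have hnbr : ∀ z ∈ S, k + 1 ≤ #(G.neighborFinset z ∩ c₀.support.toFinset) := by
    intro z hz
    have h₁ := degree_le_card_neighborFinset_inter_add_card (G := G) hcover hz
    obtain ⟨j, hj, rfl⟩ := mem_image.mp hz
    have h₂ := hdeg j hj
    omega
  obtain ⟨u, c, hc, hlen, hsupp⟩ := hc₀.exists_isCycle_insert_finset hα S hdisj hnbr
  refine ⟨u, c, hc, by omega, fun x hx => ?_⟩
  rw [← List.mem_toFinset, hsupp, mem_union]
  rcases hcover x with h | h | h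
  exacts [Or.inr h, Or.inl h, absurd h hx]

end SimpleGraph

namespace IsHamOrder

variable {V : Type} [Fintype V] {G : SimpleGraph V} {n : ℕ} {σ : ZMod n → V}

theorem adj_add_natCast (hσ : IsHamOrder G n σ) (a : ZMod n) (j : ℕ) :
    G.Adj (σ (a + j)) (σ (a + (j + 1 : ℕ))) := by
  simpa [add_assoc] using hσ.2 (a + j)

theorem injOn_add_natCast (hσ : IsHamOrder G n σ) (a : ZMod n) :
    Set.InjOn (fun j : ℕ => σ (a + j)) (Set.Iio n) := fun i hi j hj h => by
  have h' := (ZMod.natCast_eq_natCast_iff' i j n).mp (add_left_cancel (hσ.1.1 h))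
  rwa [Nat.mod_eq_of_lt hi, Nat.mod_eq_of_lt hj] at h'

theorem exists_add_natCast_eq [NeZero n] (hσ : IsHamOrder G n σ) (a : ZMod n) (x : V) :
    ∃ j < n, σ (a + j) = x := by
  obtain ⟨t, rfl⟩ := hσ.1.2 x
  exact ⟨(t - a).val, ZMod.val_lt _, by rw [ZMod.natCast_zmod_val, add_sub_cancel]⟩

theorem le_of_card_image_range_le [DecidableEq V] (hσ : IsHamOrder G n σ) (i : ZMod n)
    {m K : ℕ} (hK : K < n) (hcard : #((range m).image fun j : ℕ => σ (i + j)) ≤ K) : m ≤ K := by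
  by_contra! hm
  have hsub := card_le_card (image_subset_image (f := fun j : ℕ => σ (i + j))
    (range_subset_range.mpr hm))
  have hK' : (range (K + 1) : Set ℕ) ⊆ Set.Iio n := fun j hj => by
    simp only [coe_range, Set.mem_Iio] at hj ⊢; omega
  rw [card_image_of_injOn ((hσ.injOn_add_natCast i).mono hK'), card_range] at hsub
  omega

theorem not_adj_of_forall_not_problematic [DecidableEq V] [DecidableRel G.Adj]
    (hσ : IsHamOrder G n σ) {k : ℕ} (hα : ∀ s : Finset V, G.IsIndepSet s → #s ≤ k)
    {W : Finset V} (hW : ¬ HasCycleThrough G (n - 1) W) (hkn : k + 3 ≤ n)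
    {i : ZMod n} {m j₁ j₂ : ℕ} (hm : m ≤ k + 2) (hlt : j₁ < j₂) (hj₂ : j₂ < m)
    (hB : ∀ j < m, ¬ Problematic G W k (σ (i + j)))
    (hcons : ¬ Consec n σ (σ (i + j₁)) (σ (i + j₂))) :
    ¬ G.Adj (σ (i + j₁)) (σ (i + j₂)) := by
  have : NeZero n := ⟨by omega⟩
  set d := j₂ - j₁
  have hj₂' : σ (i + j₂) = σ (i + j₁ + d) := by
    rw [Nat.cast_sub hlt.le]; ring_nf
  have hd : 2 ≤ d := by
    by_contra! hd
    refine hcons ⟨i + j₁, Or.inl ⟨rfl, ?_⟩⟩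
    rw [hj₂', show d = 1 by omega, Nat.cast_one]
  have hnp : ∀ t ≤ d, ¬ Problematic G W k (σ (i + j₁ + t)) := fun t ht => by
    simpa [add_assoc] using hB (j₁ + t) (by omega)
  intro hadj
  obtain ⟨_, c, hc, hlen, hsupp⟩ := SimpleGraph.exists_isCycle_of_chord_of_degree hα
    (τ := fun t : ℕ => σ (i + j₁ + t)) (hσ.adj_add_natCast _) (hσ.injOn_add_natCast _)
    (by simp) (hσ.exists_add_natCast_eq _) hd (by omega) (by omega)
    (by simpa [← hj₂'] using hadj) fun t ht => by
      have := hnp t (mem_Ico.mp ht).2.le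
      simp only [Problematic, not_or, not_le] at this
      omega
  exact hW ⟨_, c, hc, hlen, fun x hx =>
    hsupp x (by rintro rfl; exact hnp 1 (by omega) (Or.inr hx))⟩

end IsHamOrder

theorem add_three_le_of_mul_rpow_le {k n : ℕ} (hk : 1 ≤ k)
    (hn : 4 * (k : ℝ) ^ ((11 : ℝ) / 5) ≤ n) : k + 3 ≤ n := by
  have hk' : (1 : ℝ) ≤ k := by exact_mod_cast hk
  have : (k : ℝ) ≤ (k : ℝ) ^ ((11 : ℝ) / 5) := Real.self_le_rpow_of_one_le hk' (by norm_num)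
  have : (k + 3 : ℝ) ≤ n := by linarith
  exact_mod_cast this

/-- There is a constant `c > 0` such that under Assumption (★) with
constant `c`: if `A` is a set of vertices no two of which are consecutive, whose continuous
closure `B` contains no problematic vertex and satisfies `|B| ≤ k + 2`, then `A` is an
independent set in `G`. -/
theorem statement4 :
    ∃ c : ℝ, 0 < c ∧
      ∀ (V : Type) [Fintype V] [DecidableEq V] (G : SimpleGraph V) [DecidableRel G.Adj]
        (n k : ℕ) (σ : ZMod n → V) (W : Finset V),
        StarAssumption G n k σ W c →
        ∀ A B : Finset V,
          (∀ u ∈ A, ∀ v ∈ A, u ≠ v → ¬ Consec n σ u v) →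
          IsClosure n σ A B →
          (∀ v ∈ B, ¬ Problematic G W k v) →
          B.card ≤ k + 2 →
          ∀ u ∈ A, ∀ v ∈ A, u ≠ v → ¬ G.Adj u v := by
  refine ⟨4, by norm_num, ?_⟩
  rintro V _ _ G _ n k σ W ⟨-, hσ, hα, -, hW, hn⟩ A _ hA ⟨⟨i, m, rfl⟩, hAB, -⟩ hB hBk
    u hu v hv huv
  have hk : 1 ≤ k := by simpa using hα {u} (by simp)
  have hkn : k + 3 ≤ n := add_three_le_of_mul_rpow_le hk hn
  have hm : m ≤ k + 2 := hσ.le_of_card_image_range_le i (by omega) hBk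
  have hB' : ∀ j < m, ¬ Problematic G W k (σ (i + j)) := fun j hj =>
    hB _ (mem_image_of_mem _ (mem_range.mpr hj))
  obtain ⟨j₁, hj₁, rfl⟩ := mem_image.mp (hAB hu)
  obtain ⟨j₂, hj₂, rfl⟩ := mem_image.mp (hAB hv)
  rw [mem_range] at hj₁ hj₂
  rcases lt_trichotomy j₁ j₂ with hlt | rfl | hlt
  · exact hσ.not_adj_of_forall_not_problematic hα hW hkn hm hlt hj₂ hB' (hA _ hu _ hv huv)
  · exact absurd rfl huv
  · exact fun hadj => hσ.not_adj_of_forall_not_problematic hα hW hkn hm hlt hj₁ hB'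
      (hA _ hv _ hu huv.symm) hadj.symm
end

section
/- There exists a constant c > 0 such that the following holds. Suppose G, H, W, k, n satisfy Assumption (★) with constant c. If 𝒜 is a simple arc-system in G of length at least a and size b whose arc-graph G_𝒜 has m arc-edges, then G[𝒜] contains an independent set of size at least a·b − m. -/
open Finset

/-!
Every arc is an independent set. Otherwise an edge `uv` inside an arc spans at most `k - 1`
interior vertices of `H`, all of degree `> 2k` and outside `W`. Shortcutting `H` along `uv` and
reinserting the skipped vertices one at a time (a vertex with more than `k` neighbours on a cycle
can always be inserted when `α(G) ≤ k`, by Pósa's rotation) leaves out a single vertex not in `W`: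
a cycle of length `n - 1` through `W`.

Two independent arcs span a triangle-free `M₂`-free graph, so the edges between them form a star.
Deleting one centre per arc-edge from the union of the arcs leaves an independent set of size at
least `a·b - m`.
-/

section Counting

variable {V : Type} {G : SimpleGraph V}

/-- The arc-graph `G_𝒜`. -/
def arcGraph (G : SimpleGraph V) (𝒜 : Finset (Finset V)) : SimpleGraph (Finset V) where
  Adj A B := A ≠ B ∧ A ∈ 𝒜 ∧ B ∈ 𝒜 ∧ ∃ u ∈ A, ∃ v ∈ B, G.Adj u v
  symm := ⟨fun _ _ ⟨hAB, hA, hB, u, hu, v, hv, huv⟩ => ⟨hAB.symm, hB, hA, v, hv, u, hu, huv.symm⟩⟩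
  loopless := ⟨fun _ h => h.1 rfl⟩

lemma M2Free.edges_meet {s : Finset V} (hs : M2Free G s) {a b x y : V} (ha : a ∈ s) (hb : b ∈ s)
    (hx : x ∈ s) (hy : y ∈ s) (hab : G.Adj a b) (hxy : G.Adj x y) :
    a = x ∨ a = y ∨ b = x ∨ b = y := by
  by_contra! hne
  exact hs ⟨a, b, x, y, ha, hb, hx, hy, hab, hxy, hne.1, hne.2.1, hne.2.2.1, hne.2.2.2⟩

lemma M2Free.exists_center_of_triangleFree {s : Finset V} (hs : M2Free G s)
    (htri : ∀ a ∈ s, ∀ b ∈ s, ∀ c ∈ s, G.Adj a b → G.Adj b c → ¬ G.Adj a c)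
    {u v : V} (hu : u ∈ s) (hv : v ∈ s) (huv : G.Adj u v) :
    ∃ c, ∀ x ∈ s, ∀ y ∈ s, G.Adj x y → c = x ∨ c = y := by
  by_cases hcu : ∀ x ∈ s, ∀ y ∈ s, G.Adj x y → u = x ∨ u = y
  · exact ⟨u, hcu⟩
  push Not at hcu
  obtain ⟨x₀, hx₀, y₀, hy₀, hxy₀, hux₀, huy₀⟩ := hcu
  obtain ⟨w, hw, hvw, hwu⟩ : ∃ w ∈ s, G.Adj v w ∧ w ≠ u := by
    rcases hs.edges_meet hu hv hx₀ hy₀ huv hxy₀ with h | h | rfl | rfl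
    · exact absurd h hux₀
    · exact absurd h huy₀
    · exact ⟨y₀, hy₀, hxy₀, huy₀.symm⟩
    · exact ⟨x₀, hx₀, hxy₀.symm, hux₀.symm⟩
  refine ⟨v, fun x hx y hy hxy => ?_⟩
  by_contra! hvxy
  -- an edge avoiding `v` meets both `uv` and `vw`, so it is `uw`
  have huw : G.Adj u w := by
    have := hs.edges_meet hu hv hx hy huv hxy
    have := hs.edges_meet hv hw hx hy hvw hxy
    grind [SimpleGraph.adj_comm]
  exact htri u hu v hv w hw huv hvw huw

variable [DecidableEq V]

lemma not_adj_of_adj_of_adj_of_isIndepSet {A B : Finset V} (hA : G.IsIndepSet ↑A)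
    (hB : G.IsIndepSet ↑B) :
    ∀ a ∈ A ∪ B, ∀ b ∈ A ∪ B, ∀ c ∈ A ∪ B, G.Adj a b → G.Adj b c → ¬ G.Adj a c := by
  intro a ha b hb c hc hab hbc hac
  simp only [mem_union] at ha hb hc
  rcases ha with ha | ha <;> rcases hb with hb | hb <;> rcases hc with hc | hc <;>
    first
    | exact hA ha hb hab.ne hab | exact hA hb hc hbc.ne hbc | exact hA ha hc hac.ne hac
    | exact hB ha hb hab.ne hab | exact hB hb hc hbc.ne hbc | exact hB ha hc hac.ne hac

variable [Fintype V] [DecidableRel G.Adj]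

instance (𝒜 : Finset (Finset V)) : DecidableRel (arcGraph G 𝒜).Adj :=
  fun _ _ => inferInstanceAs (Decidable (_ ∧ _ ∧ _ ∧ _))

lemma two_mul_card_edgeFinset_arcGraph (𝒜 : Finset (Finset V)) :
    2 * #(arcGraph G 𝒜).edgeFinset = #((𝒜 ×ˢ 𝒜).filter
      fun P => P.1 ≠ P.2 ∧ ∃ u ∈ P.1, ∃ v ∈ P.2, G.Adj u v) := by
  rw [← SimpleGraph.dart_card_eq_twice_card_edges, ← card_univ,
    ← card_image_of_injective _ SimpleGraph.Dart.toProd_injective]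
  congr 1
  ext ⟨A, B⟩
  simp only [mem_image, mem_univ, true_and, mem_filter, mem_product]
  constructor
  · rintro ⟨d, hd⟩
    obtain ⟨hAB, hA, hB, hedge⟩ := hd ▸ d.adj
    exact ⟨⟨hA, hB⟩, hAB, hedge⟩
  · rintro ⟨⟨hA, hB⟩, hAB, hedge⟩
    exact ⟨⟨(A, B), hAB, hA, hB, hedge⟩, rfl⟩

lemma exists_cover_arcGraph {𝒜 : Finset (Finset V)} (hind : ∀ A ∈ 𝒜, G.IsIndepSet ↑A)
    (hM2 : ∀ A ∈ 𝒜, ∀ B ∈ 𝒜, A ≠ B → M2Free G (A ∪ B)) :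
    ∃ D : Finset V, #D ≤ #(arcGraph G 𝒜).edgeFinset ∧
      ∀ A ∈ 𝒜, ∀ B ∈ 𝒜, A ≠ B → ∀ u ∈ A, ∀ v ∈ B, G.Adj u v → u ∈ D ∨ v ∈ D := by
  have hcenter : ∀ e ∈ (arcGraph G 𝒜).edgeFinset, ∃ c, ∀ A ∈ e, ∀ B ∈ e,
      ∀ u ∈ A, ∀ v ∈ B, G.Adj u v → c = u ∨ c = v := by
    intro e he
    induction e using Sym2.ind with | h A B => ?_
    obtain ⟨hAB, hA, hB, u, hu, v, hv, huv⟩ := SimpleGraph.mem_edgeFinset.1 he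
    obtain ⟨c, hc⟩ := (hM2 A hA B hB hAB).exists_center_of_triangleFree
      (not_adj_of_adj_of_adj_of_isIndepSet (hind A hA) (hind B hB))
      (mem_union_left _ hu) (mem_union_right _ hv) huv
    have hsub : ∀ T ∈ s(A, B), T ⊆ A ∪ B := fun T hT => by
      rcases Sym2.mem_iff.1 hT with rfl | rfl
      exacts [subset_union_left, subset_union_right]
    exact ⟨c, fun A' hA' B' hB' x hx y hy => hc x (hsub A' hA' hx) y (hsub B' hB' hy)⟩
  refine ⟨(arcGraph G 𝒜).edgeFinset.attach.image fun e => (hcenter e.1 e.2).choose,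
    card_image_le.trans_eq card_attach, fun A hA B hB hAB u hu v hv huv => ?_⟩
  have he : s(A, B) ∈ (arcGraph G 𝒜).edgeFinset :=
    SimpleGraph.mem_edgeFinset.2 ⟨hAB, hA, hB, u, hu, v, hv, huv⟩
  have hmem := mem_image_of_mem (fun e : (arcGraph G 𝒜).edgeFinset => (hcenter e.1 e.2).choose)
    (mem_attach _ ⟨_, he⟩)
  rcases (hcenter _ he).choose_spec A (Sym2.mem_mk_left _ _) B (Sym2.mem_mk_right _ _)
    u hu v hv huv with h | h
  exacts [Or.inl (h ▸ hmem), Or.inr (h ▸ hmem)]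

theorem exists_isIndepSet_card_ge {𝒜 : Finset (Finset V)} {a : ℕ}
    (hdisj : (𝒜 : Set (Finset V)).PairwiseDisjoint id) (hind : ∀ A ∈ 𝒜, G.IsIndepSet ↑A)
    (hM2 : ∀ A ∈ 𝒜, ∀ B ∈ 𝒜, A ≠ B → M2Free G (A ∪ B)) (hlen : ∀ A ∈ 𝒜, a ≤ #A) :
    ∃ I ⊆ 𝒜.biUnion id, G.IsIndepSet ↑I ∧ a * #𝒜 - #(arcGraph G 𝒜).edgeFinset ≤ #I := by
  obtain ⟨D, hD, hcover⟩ := exists_cover_arcGraph hind hM2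
  refine ⟨𝒜.biUnion id \ D, sdiff_subset, fun u hu v hv huv hadj => ?_, ?_⟩
  · simp only [coe_sdiff, Set.mem_sdiff, mem_coe, mem_biUnion, id] at hu hv
    obtain ⟨⟨A, hA, huA⟩, huD⟩ := hu
    obtain ⟨⟨B, hB, hvB⟩, hvD⟩ := hv
    by_cases hAB : A = B
    · exact hind B hB (hAB ▸ huA) hvB huv hadj
    · exact (hcover A hA B hB hAB u huA v hvB hadj).elim huD hvD
  · have hsum : a * #𝒜 ≤ #(𝒜.biUnion id) := by
      rw [card_biUnion hdisj, mul_comm, ← smul_eq_mul]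
      exact card_nsmul_le_sum _ _ _ hlen
    have := le_card_sdiff D (𝒜.biUnion id)
    omega

end Counting

/-- `τ` runs around a cycle of `G` with period `ℓ`, visiting exactly the vertices outside `X`. -/
structure IsHamCycleAvoiding {V : Type} (G : SimpleGraph V) (X : Finset V) (ℓ : ℕ)
    (τ : ℕ → V) : Prop where
  pos : 0 < ℓ
  eq_iff : ∀ a b, τ a = τ b ↔ a ≡ b [MOD ℓ]
  adj : ∀ j, G.Adj (τ j) (τ (j + 1))
  notMem : ∀ j, τ j ∉ X
  exists_eq : ∀ v ∉ X, ∃ j, τ j = v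

namespace IsHamCycleAvoiding

variable {V : Type} {G : SimpleGraph V} {X : Finset V} {ℓ : ℕ} {τ : ℕ → V}

lemma periodic (h : IsHamCycleAvoiding G X ℓ τ) : Function.Periodic τ ℓ :=
  fun j => (h.eq_iff _ _).2 (Nat.add_mod_right j ℓ)

lemma eq_of_lt (h : IsHamCycleAvoiding G X ℓ τ) {a b : ℕ} (ha : a < ℓ) (hb : b < ℓ)
    (hab : τ a = τ b) : a = b :=
  ((h.eq_iff a b).1 hab).eq_of_lt_of_lt ha hb

lemma exists_lt_eq (h : IsHamCycleAvoiding G X ℓ τ) {v : V} (hv : v ∉ X) :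
    ∃ j < ℓ, τ j = v := by
  obtain ⟨j, rfl⟩ := h.exists_eq v hv
  exact ⟨j % ℓ, Nat.mod_lt j h.pos, h.periodic.map_mod_nat j⟩

lemma two_le (h : IsHamCycleAvoiding G X ℓ τ) : 2 ≤ ℓ := by
  by_contra! hℓ
  have h1 : ℓ = 1 := by have := h.pos; omega
  exact (h.adj 0).ne ((h.eq_iff 0 1).2 (h1 ▸ Nat.modEq_one))

lemma rotate (h : IsHamCycleAvoiding G X ℓ τ) (r : ℕ) :
    IsHamCycleAvoiding G X ℓ (fun j => τ (j + r)) where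
  pos := h.pos
  eq_iff a b := (h.eq_iff _ _).trans ⟨Nat.ModEq.add_right_cancel' r, Nat.ModEq.add_right r⟩
  adj j := by simpa only [Nat.add_right_comm j 1 r] using h.adj (j + r)
  notMem j := h.notMem (j + r)
  exists_eq v hv := by
    obtain ⟨j, rfl⟩ := h.exists_eq v hv
    refine ⟨j + ℓ * r - r, ?_⟩
    rw [Nat.sub_add_cancel ((Nat.le_mul_of_pos_left r h.pos).trans (Nat.le_add_left _ _))]
    exact (h.eq_iff _ _).2 (Nat.add_mul_mod_self_left j ℓ r)

lemma of_path {L : ℕ} {π : ℕ → V} (hinj : Set.InjOn π (Set.Iio L))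
    (hadj : ∀ j, j + 1 < L → G.Adj (π j) (π (j + 1))) (hclose : G.Adj (π (L - 1)) (π 0))
    (hnotMem : ∀ j < L, π j ∉ X) (hcover : ∀ v ∉ X, ∃ j < L, π j = v) :
    IsHamCycleAvoiding G X L (fun j => π (j % L)) := by
  have hL : 2 ≤ L := by
    by_contra! hL
    exact hclose.ne (by rw [show L - 1 = 0 by omega])
  refine ⟨by omega, fun a b => ⟨fun hab => hinj (Nat.mod_lt a (by omega))
    (Nat.mod_lt b (by omega)) hab, fun hab => congrArg π hab⟩, fun j => ?_,
    fun j => hnotMem _ (Nat.mod_lt j (by omega)), fun v hv => ?_⟩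
  · by_cases hj : j % L + 1 < L
    · rw [Nat.add_mod, Nat.mod_eq_of_lt (by omega : 1 < L), Nat.mod_eq_of_lt hj]
      exact hadj _ hj
    · have hlast : j % L = L - 1 := by have := Nat.mod_lt j (by omega : 0 < L); omega
      rw [hlast, Nat.add_mod, hlast, Nat.mod_eq_of_lt (by omega : 1 < L),
        Nat.sub_add_cancel (by omega), Nat.mod_self]
      exact hclose
  · obtain ⟨j, hj, rfl⟩ := hcover v hv
    exact ⟨j, by rw [Nat.mod_eq_of_lt hj]⟩

lemma hasCycleThrough (h : IsHamCycleAvoiding G X ℓ τ) (hℓ : 3 ≤ ℓ) {S : Set V}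
    (hS : ∀ v ∈ S, v ∉ X) : HasCycleThrough G ℓ S := by
  obtain ⟨m, rfl⟩ : ∃ m, ℓ = m + 3 := ⟨ℓ - 3, by omega⟩
  have hadj : ∀ a b : Fin (m + 3), ((b - a : Fin (m + 3)) : ℕ) = 1 → G.Adj (τ a) (τ b) := by
    intro a b hab
    rcases le_or_gt a b with hle | hlt
    · rw [Fin.coe_sub_iff_le.2 hle] at hab
      rw [show (b : ℕ) = a + 1 by omega]
      exact h.adj a
    · rw [Fin.coe_sub_iff_lt.2 hlt] at hab
      have := a.isLt
      have hsucc := h.adj a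
      rwa [show (a : ℕ) + 1 = 0 + (m + 3) by omega, h.periodic 0, ← show (b : ℕ) = 0 by omega]
        at hsucc
  let f : SimpleGraph.cycleGraph (m + 3) →g G :=
    ⟨fun i => τ i, fun hab => (SimpleGraph.cycleGraph_adj'.1 hab).elim
      (fun h1 => (hadj _ _ h1).symm) (hadj _ _)⟩
  have hf : Function.Injective f := fun a b hab => Fin.ext (h.eq_of_lt a.isLt b.isLt hab)
  refine ⟨f 0, (SimpleGraph.cycleGraph.cycle m).map f,
    (SimpleGraph.Walk.isCycle_map_iff_of_injective hf).2 SimpleGraph.cycleGraph.isCycle_cycle,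
    by simp, fun v hv => ?_⟩
  obtain ⟨j, hj, rfl⟩ := h.exists_lt_eq (hS v hv)
  have hvert : (SimpleGraph.cycleGraph.cycle m).getVert (m + 3 - j) = ⟨j, hj⟩ := by
    rw [SimpleGraph.cycleGraph.getVert_cycle (by omega)]
    ext
    simp [show m + 3 - (m + 3 - j) = j by omega, Nat.mod_eq_of_lt hj]
  rw [SimpleGraph.Walk.support_map]
  exact List.mem_map.2 ⟨⟨j, hj⟩, hvert ▸ SimpleGraph.Walk.getVert_mem_support _ _, rfl⟩

variable [DecidableEq V]

lemma shortcut (h : IsHamCycleAvoiding G X ℓ τ) {d : ℕ} (hd : d < ℓ)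
    (hchord : G.Adj (τ 0) (τ d)) :
    ∃ τ', IsHamCycleAvoiding G (X ∪ (Ico 1 d).image τ) (ℓ + 1 - d) τ' := by
  have hd0 : d ≠ 0 := by rintro rfl; exact hchord.ne rfl
  let idx : ℕ → ℕ := fun j => if j = 0 then 0 else j + d - 1
  have hidx : ∀ j < ℓ + 1 - d, idx j < ℓ := fun j hj => by dsimp only [idx]; split_ifs <;> omega
  have hskip : ∀ j < ℓ + 1 - d, ∀ i ∈ Ico 1 d, τ (idx j) ≠ τ i := fun j hj i hi hji => by
    have := h.eq_of_lt (hidx j hj) (by simp at hi; omega) hji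
    simp only [mem_Ico, idx] at hi this; split_ifs at this <;> omega
  refine ⟨_, of_path (π := τ ∘ idx) (fun a ha b hb hab => ?_) (fun j hj => ?_) ?_
    (fun j hj => ?_) (fun v hv => ?_)⟩
  · have := h.eq_of_lt (hidx a ha) (hidx b hb) hab
    simp only [Set.mem_Iio, idx] at ha hb this; split_ifs at this <;> omega
  · rcases Nat.eq_zero_or_pos j with rfl | hj0
    · simpa [idx] using hchord
    · simpa [idx, hj0.ne', show j + 1 + d - 1 = j + d - 1 + 1 by omega] using h.adj (j + d - 1)
  · simpa [idx, show ℓ + 1 - d - 1 + d - 1 = ℓ - 1 by omega, show ℓ + 1 - d - 1 ≠ 0 by omega,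
      ← h.periodic 0, show ℓ - 1 + 1 = 0 + ℓ by omega] using h.adj (ℓ - 1)
  · simp only [Function.comp_apply, mem_union, mem_image, not_or, not_exists, not_and]
    exact ⟨h.notMem _, fun i hi => (hskip j hj i hi).symm⟩
  · obtain ⟨i, hi, rfl⟩ := h.exists_lt_eq (v := v) (fun hvX => hv (mem_union_left _ hvX))
    by_cases hi0 : i = 0
    · exact ⟨0, by omega, by simp [idx, hi0]⟩
    by_cases hid : i < d
    · exact absurd (mem_union_right _ (mem_image_of_mem τ (by simp; omega))) hv
    · exact ⟨i + 1 - d, by omega, by simp [idx, show i + 1 - d ≠ 0 by omega,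
        show i + 1 - d + d - 1 = i by omega]⟩

/-- Pósa's flip: the new cycle is `x, τ t, …, τ 0, τ (t + 1), …, τ (ℓ - 1)`. -/
lemma insert_of_flip (h : IsHamCycleAvoiding G X ℓ τ) {x : V} (hx : x ∈ X) {t : ℕ}
    (ht : t + 1 < ℓ) (hchord : G.Adj (τ 0) (τ (t + 1))) (hxt : G.Adj x (τ t))
    (hxl : G.Adj x (τ (ℓ - 1))) :
    ∃ τ', IsHamCycleAvoiding G (X.erase x) (ℓ + 1) τ' := by
  let idx : ℕ → ℕ := fun j => if j ≤ t + 1 then t + 1 - j else j - 1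
  let π : ℕ → V := fun j => if j = 0 then x else τ (idx j)
  have hidx : ∀ j < ℓ + 1, idx j < ℓ := fun j hj => by dsimp only [idx]; split_ifs <;> omega
  have hxτ : ∀ i, x ≠ τ i := fun i hxi => h.notMem i (hxi ▸ hx)
  refine ⟨_, of_path (π := π) (fun a ha b hb hab => ?_) (fun j hj => ?_) ?_
    (fun j hj => ?_) (fun v hv => ?_)⟩
  · simp only [Set.mem_Iio] at ha hb
    by_cases ha0 : a = 0 <;> by_cases hb0 : b = 0 <;>
      simp only [π, ha0, hb0, if_true, if_false] at hab
    · omega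
    · exact absurd hab (hxτ _)
    · exact absurd hab.symm (hxτ _)
    · have := h.eq_of_lt (hidx a ha) (hidx b hb) hab
      simp only [idx] at this; split_ifs at this <;> omega
  · rcases Nat.eq_zero_or_pos j with rfl | hj0
    · simpa [π, idx] using hxt
    have hidx_eq : ∀ i, idx i = if i ≤ t + 1 then t + 1 - i else i - 1 := fun _ => rfl
    simp only [π, hj0.ne', Nat.add_one_ne_zero, if_false, hidx_eq]
    rcases lt_trichotomy j (t + 1) with hjt | rfl | hjt
    · rw [if_pos hjt.le, if_pos (by omega : j + 1 ≤ t + 1), show t + 1 - j = t - j + 1 by omega,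
        show t + 1 - (j + 1) = t - j by omega]
      exact (h.adj _).symm
    · simpa using hchord
    · rw [if_neg (by omega), if_neg (by omega), show j + 1 - 1 = j - 1 + 1 by omega]
      exact h.adj _
  · simpa [π, idx, show ¬ ℓ ≤ t + 1 by omega, show ℓ ≠ 0 by omega] using hxl.symm
  · by_cases hj0 : j = 0
    · simp [π, hj0]
    · simpa [π, hj0] using fun _ => h.notMem _
  · by_cases hvx : v = x
    · exact ⟨0, by omega, by simp [π, hvx]⟩
    obtain ⟨i, hi, rfl⟩ := h.exists_lt_eq (v := v) (fun hvX => hv (mem_erase.2 ⟨hvx, hvX⟩))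
    by_cases hit : i ≤ t
    · exact ⟨t + 1 - i, by omega, by simp [π, idx, show t + 1 - i ≠ 0 by omega,
        show t + 1 - i ≤ t + 1 by omega, show t + 1 - (t + 1 - i) = i by omega]⟩
    · exact ⟨i + 1, by omega, by simp [π, idx, show ¬ i + 1 ≤ t + 1 by omega]⟩

lemma insert_of_adj_of_adj_succ (h : IsHamCycleAvoiding G X ℓ τ) {x : V} (hx : x ∈ X)
    {p : ℕ} (hxp : G.Adj x (τ p)) (hxp' : G.Adj x (τ (p + 1))) :
    ∃ τ', IsHamCycleAvoiding G (X.erase x) (ℓ + 1) τ' := by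
  have := h.two_le
  refine (h.rotate (p + 1)).insert_of_flip hx (t := 0) (by omega) ?_ ?_ ?_
  · rw [show 0 + 1 + (p + 1) = p + 1 + 1 by omega, zero_add]
    exact h.adj (p + 1)
  · rwa [zero_add]
  · rwa [show ℓ - 1 + (p + 1) = p + ℓ by omega, h.periodic p]

lemma insert_of_adj_of_adj_succ_succ (h : IsHamCycleAvoiding G X ℓ τ) {x : V} (hx : x ∈ X)
    {p q : ℕ} (hqp : q < p) (hp : p < ℓ) (hxp : G.Adj x (τ p)) (hxq : G.Adj x (τ q))
    (hpq : G.Adj (τ (p + 1)) (τ (q + 1))) :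
    ∃ τ', IsHamCycleAvoiding G (X.erase x) (ℓ + 1) τ' := by
  refine (h.rotate (q + 1)).insert_of_flip hx (t := p - q - 1) (by omega) ?_ ?_ ?_
  · rw [show p - q - 1 + 1 + (q + 1) = p + 1 by omega, zero_add]
    exact hpq.symm
  · rwa [show p - q - 1 + (q + 1) = p by omega]
  · rwa [show ℓ - 1 + (q + 1) = q + ℓ by omega, h.periodic q]

variable [Fintype V] [DecidableRel G.Adj]

lemma degree_le_card_filter_adj (h : IsHamCycleAvoiding G X ℓ τ) {x : V} (hx : x ∈ X) :
    G.degree x ≤ #((range ℓ).filter fun p => G.Adj x (τ p)) + (#X - 1) := by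
  rw [← G.card_neighborFinset_eq_degree, ← card_erase_of_mem hx]
  calc #(G.neighborFinset x)
      ≤ #(((range ℓ).filter fun p => G.Adj x (τ p)).image τ ∪ X.erase x) := by
        refine card_le_card fun w hw => ?_
        rw [SimpleGraph.mem_neighborFinset] at hw
        by_cases hwX : w ∈ X
        · exact mem_union_right _ (mem_erase.2 ⟨hw.ne', hwX⟩)
        · obtain ⟨p, hp, rfl⟩ := h.exists_lt_eq hwX
          exact mem_union_left _ (mem_image_of_mem _ (by simpa [hp] using hw))
    _ ≤ _ := (card_union_le _ _).trans (Nat.add_le_add_right card_image_le _)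

/-- If `x` cannot be inserted, then `x` and the successors of its neighbours on the cycle are
independent. -/
lemma exists_insert {k : ℕ} (hα : ∀ s : Finset V, G.IsIndepSet ↑s → #s ≤ k)
    (h : IsHamCycleAvoiding G X ℓ τ) (hXk : #X ≤ k) {x : V} (hx : x ∈ X)
    (hdeg : 2 * k < G.degree x) :
    ∃ τ', IsHamCycleAvoiding G (X.erase x) (ℓ + 1) τ' := by
  set P := (range ℓ).filter fun p => G.Adj x (τ p)
  have hP : G.degree x ≤ #P + (#X - 1) := h.degree_le_card_filter_adj hx
  have hPmem : ∀ p ∈ P, p < ℓ ∧ G.Adj x (τ p) := fun p hp => by simpa [P] using hp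
  by_contra hnone
  have hsucc : Set.InjOn (fun p => τ (p + 1)) P := fun p hp q hq hpq =>
    (Nat.ModEq.add_right_cancel' 1 ((h.eq_iff _ _).1 hpq)).eq_of_lt_of_lt (hPmem p hp).1
      (hPmem q hq).1
  have hxS : x ∉ P.image fun p => τ (p + 1) := fun hxS => by
    obtain ⟨p, -, hp⟩ := mem_image.1 hxS
    exact h.notMem _ (hp ▸ hx)
  have hind : G.IsIndepSet ↑(insert x (P.image fun p => τ (p + 1))) := by
    intro u hu v hv huv hadj
    simp only [coe_insert, coe_image, Set.mem_insert_iff, Set.mem_image, mem_coe] at hu hv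
    rcases hu with rfl | ⟨p, hp, rfl⟩ <;> rcases hv with rfl | ⟨q, hq, rfl⟩
    · exact huv rfl
    · exact hnone (h.insert_of_adj_of_adj_succ hx (hPmem q hq).2 hadj)
    · exact hnone (h.insert_of_adj_of_adj_succ hx (hPmem p hp).2 hadj.symm)
    · rcases lt_trichotomy p q with hpq | rfl | hpq
      · exact hnone (h.insert_of_adj_of_adj_succ_succ hx hpq (hPmem q hq).1 (hPmem q hq).2
          (hPmem p hp).2 hadj.symm)
      · exact huv rfl
      · exact hnone (h.insert_of_adj_of_adj_succ_succ hx hpq (hPmem p hp).1 (hPmem p hp).2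
          (hPmem q hq).2 hadj)
  have := hα _ hind
  rw [card_insert_of_notMem hxS, card_image_of_injOn hsucc] at this
  omega

lemma exists_avoiding_singleton {k : ℕ} (hα : ∀ s : Finset V, G.IsIndepSet ↑s → #s ≤ k)
    (h : IsHamCycleAvoiding G X ℓ τ) (hXk : #X ≤ k) (hdeg : ∀ v ∈ X, 2 * k < G.degree v)
    {y : V} (hy : y ∈ X) : ∃ τ', IsHamCycleAvoiding G {y} (ℓ + #X - 1) τ' := by
  induction X using Finset.strongInduction generalizing ℓ τ with
  | H X ih =>
    obtain rfl | hX := eq_singleton_or_nontrivial hy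
    · exact ⟨τ, by simpa using h⟩
    obtain ⟨x, hx, hxy⟩ := hX.exists_ne y
    obtain ⟨τ', h'⟩ := h.exists_insert hα hXk hx (hdeg x hx)
    have hcard := card_erase_add_one hx
    obtain ⟨τ'', h''⟩ := ih _ (erase_ssubset hx) h' (by omega)
      (fun v hv => hdeg v (mem_of_mem_erase hv)) (mem_erase.2 ⟨hxy.symm, hy⟩)
    exact ⟨τ'', by rwa [show ℓ + #X - 1 = ℓ + 1 + #(X.erase x) - 1 by omega]⟩

end IsHamCycleAvoiding

section HamiltonOrder

variable {V : Type} {n : ℕ} {σ : ZMod n → V}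

lemma min_le_card_image_range [DecidableEq V] (hσ : Function.Injective σ) (i : ZMod n) (m : ℕ) :
    min m n ≤ #((range m).image fun j : ℕ => σ (i + j)) := by
  simpa using card_le_card_of_injOn (s := range (min m n))
    (t := (range m).image fun j : ℕ => σ (i + j)) (fun j : ℕ => σ (i + j))
    (fun j hj => mem_image_of_mem _ (by simp at hj ⊢; omega)) fun a ha b hb hab =>
      ((ZMod.natCast_eq_natCast_iff _ _ _).1 (add_left_cancel (hσ hab))).eq_of_lt_of_lt
        (by simp at ha; omega) (by simp at hb; omega)

variable [Fintype V] {G : SimpleGraph V}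

lemma IsHamOrder.isHamCycleAvoiding [NeZero n] (hσ : IsHamOrder G n σ) (w : ZMod n) :
    IsHamCycleAvoiding G ∅ n (fun j : ℕ => σ (w + j)) where
  pos := Nat.pos_of_neZero n
  eq_iff a b := by rw [hσ.1.injective.eq_iff, add_right_inj, ZMod.natCast_eq_natCast_iff]
  adj j := by simpa [add_assoc] using hσ.2 (w + j)
  notMem _ := notMem_empty _
  exists_eq v _ := by
    obtain ⟨z, rfl⟩ := hσ.1.surjective v
    exact ⟨(z - w).val, by simp⟩

variable [DecidableEq V] [DecidableRel G.Adj] {k : ℕ} {W : Finset V}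

theorem IsHamOrder.not_adj_of_interior (hcard : Fintype.card V = n) (hσ : IsHamOrder G n σ)
    (hα : ∀ s : Finset V, G.IsIndepSet ↑s → #s ≤ k) (hW : ¬ HasCycleThrough G (n - 1) ↑W)
    (w : ZMod n) {d : ℕ} (hd : 2 ≤ d) (hdk : d ≤ k + 1)
    (hmid : ∀ r : ℕ, 1 ≤ r → r < d → 2 * k < G.degree (σ (w + r)) ∧ σ (w + r) ∉ W) :
    ¬ G.Adj (σ w) (σ (w + d)) := by
  intro hchord
  have hn : 2 * k + 1 < n := by
    have := (hmid 1 le_rfl hd).1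
    have := G.degree_lt_card_verts (σ (w + (1 : ℕ)))
    omega
  have : NeZero n := ⟨by omega⟩
  have hτ := hσ.isHamCycleAvoiding w
  set τ : ℕ → V := fun j => σ (w + j)
  set X := (Ico 1 d).image τ
  obtain ⟨τ₁, h₁⟩ : ∃ τ₁, IsHamCycleAvoiding G X (n + 1 - d) τ₁ := by
    simpa only [empty_union] using hτ.shortcut (d := d) (by omega) (by simpa [τ] using hchord)
  have hX : #X = d - 1 := by
    rw [card_image_of_injOn fun a ha b hb hab => hτ.eq_of_lt (by simp at ha; omega)
      (by simp at hb; omega) hab, Nat.card_Ico]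
  have hXgood : ∀ v ∈ X, 2 * k < G.degree v ∧ v ∉ W := by
    simp only [X, mem_image, mem_Ico]
    rintro _ ⟨r, ⟨hr1, hr2⟩, rfl⟩
    exact hmid r hr1 hr2
  have h1X : τ 1 ∈ X := mem_image_of_mem τ (by simp; omega)
  obtain ⟨τ₂, h₂⟩ := h₁.exists_avoiding_singleton hα (by omega) (fun v hv => (hXgood v hv).1) h1X
  rw [hX, show n + 1 - d + (d - 1) - 1 = n - 1 by omega] at h₂
  exact hW (h₂.hasCycleThrough (by omega) fun v hv hv1 =>
    (hXgood _ h1X).2 (mem_singleton.1 hv1 ▸ hv))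

end HamiltonOrder

namespace ArcSystem

variable {V : Type} [Fintype V] [DecidableEq V] {G : SimpleGraph V} [DecidableRel G.Adj]
  {n k : ℕ} {σ : ZMod n → V} {W : Finset V}

lemma pairwiseDisjoint_arcs (𝒜 : ArcSystem G n k σ W) :
    (𝒜.arcs : Set (Finset V)).PairwiseDisjoint id := fun A hA B hB hAB =>
  Disjoint.mono (𝒜.closure_spec A hA).2.1 (𝒜.closure_spec B hB).2.1
    (𝒜.closures_disjoint A hA B hB hAB)

theorem isIndepSet_of_mem (hcard : Fintype.card V = n) (hσ : IsHamOrder G n σ)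
    (hα : ∀ s : Finset V, G.IsIndepSet ↑s → #s ≤ k) (hW : ¬ HasCycleThrough G (n - 1) ↑W)
    {𝒜 : ArcSystem G n k σ W} (h𝒜 : 𝒜.Independent) {A : Finset V} (hA : A ∈ 𝒜.arcs) :
    G.IsIndepSet ↑A := by
  obtain ⟨⟨i, m, hcl⟩, hAcl, -⟩ := 𝒜.closure_spec A hA
  have hgood : ∀ v ∈ 𝒜.cl A, 2 * k < G.degree v ∧ v ∉ W := fun v hv => by
    simpa [Problematic] using 𝒜.no_problematic A hA v hv
  have hcoord : ∀ x ∈ A, ∃ s < m, σ (i + s) = x := fun x hx => by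
    simpa [hcl] using hAcl hx
  intro u hu v hv huv hadj
  have hkn : k < n := by
    have := (hgood u (hAcl hu)).1
    have := G.degree_lt_card_verts u
    omega
  have hmk : m ≤ k := by
    have := min_le_card_image_range hσ.1.injective i m
    have := h𝒜 A hA
    rw [← hcl] at *
    omega
  obtain ⟨s, hs, rfl⟩ := hcoord u hu
  obtain ⟨t, ht, rfl⟩ := hcoord v hv
  wlog hst : s < t generalizing s t
  · exact this t ht hv s hs hu huv.symm hadj.symm
      (lt_of_le_of_ne (not_lt.1 hst) fun h => huv (h ▸ rfl))
  have hd1 : t - s ≠ 1 := fun h1 => 𝒜.no_consec A hA _ hu _ hv huv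
    ⟨i + s, Or.inl ⟨rfl, by rw [show t = s + 1 by omega, Nat.cast_succ, add_assoc]⟩⟩
  refine hσ.not_adj_of_interior hcard hα hW (i + s) (d := t - s) (by omega) (by omega)
    (fun r hr1 hr2 => hgood _ ?_) ?_
  · rw [hcl]
    exact mem_image.2 ⟨s + r, mem_range.2 (by omega), by simp only [Nat.cast_add, add_assoc]⟩
  · convert hadj using 2
    rw [Nat.cast_sub hst.le]
    ring

end ArcSystem

/-- There is a constant `c > 0` such that under Assumption (★) with
constant `c`: if `𝒜` is a simple arc-system of length at least `a` and size `b` whose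
arc-graph has `m` arc-edges (so `2m` ordered pairs of distinct arcs joined by an edge of
`G`), then `G[𝒜]` contains an independent set of size at least `a·b − m`. -/
theorem statement7 :
    ∃ c : ℝ, 0 < c ∧
      ∀ (V : Type) [Fintype V] [DecidableEq V] (G : SimpleGraph V) [DecidableRel G.Adj]
        (n k : ℕ) (σ : ZMod n → V) (W : Finset V),
        StarAssumption G n k σ W c →
        ∀ (𝒜 : ArcSystem G n k σ W) (a b m : ℕ),
          𝒜.Simple → 𝒜.LengthGe a → 𝒜.arcs.card = b →
          2 * m = ((𝒜.arcs ×ˢ 𝒜.arcs).filter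
            (fun P => P.1 ≠ P.2 ∧ ∃ u ∈ P.1, ∃ v ∈ P.2, G.Adj u v)).card →
          HasIndepInArcs G 𝒜 (a * b - m) := by
  refine ⟨1, one_pos, fun V _ _ G _ n k σ W hstar 𝒜 a b m hsimple hlen hb hm => ?_⟩
  obtain ⟨hcard, hσ, hα, -, hW, -⟩ := hstar
  obtain ⟨I, hIsub, hI, hIcard⟩ := exists_isIndepSet_card_ge 𝒜.pairwiseDisjoint_arcs
    (fun A hA => ArcSystem.isIndepSet_of_mem hcard hσ hα hW hsimple.1 hA) hsimple.2 hlen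
  have := two_mul_card_edgeFinset_arcGraph (G := G) 𝒜.arcs
  refine ⟨I, fun v hv => by simpa using hIsub hv, fun u hu v hv => hI hu hv, ?_⟩
  rw [hb] at hIcard
  omega
end

section
/- Let G be a graph on n vertices with Hamilton cycle v₁, v₂, …, v_n. Suppose 1 ≤ p₁ < p₂ < q₁ < q₂ < r₁ < r₂ < s₁ < s₂ ≤ n and {v_{p₁}, v_{r₂}}, {v_{p₂}, v_{r₁}}, {v_{q₁}, v_{s₂}}, {v_{q₂}, v_{s₁}} are edges of G. Then G contains a cycle of length n − (p₂−p₁−1) − (q₂−q₁−1) − (r₂−r₁−1) − (s₂−s₁−1) whose vertex set consists of all vertices of G except the vertices v_i with p₁ < i < p₂, with q₁ < i < q₂, with r₁ < i < r₂, or with s₁ < i < s₂. -/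
/-- `v 1, v 2, …, v n` is a Hamilton cycle of `G`: the `v i` for `1 ≤ i ≤ n` are pairwise
distinct, every vertex occurs among them, consecutive ones are adjacent, and `v n` is
adjacent to `v 1`. -/
def IsHamCycleList {V : Type} [Fintype V] (G : SimpleGraph V) (n : ℕ) (v : ℕ → V) : Prop :=
  Fintype.card V = n ∧
  (∀ i j : ℕ, 1 ≤ i → i < j → j ≤ n → v i ≠ v j) ∧
  (∀ x : V, ∃ i : ℕ, 1 ≤ i ∧ i ≤ n ∧ v i = x) ∧
  (∀ i : ℕ, 1 ≤ i → i < n → G.Adj (v i) (v (i + 1))) ∧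
  G.Adj (v n) (v 1)

/-!
Delete the four open intervals of the Hamilton cycle. What remains splits into the five
arcs `v 1 … v p₁`, `v p₂ … v q₁`, `v q₂ … v r₁`, `v r₂ … v s₁` and `v s₂ … v n`, and the four
chords re-link them, in the order

  `v 1 … v p₁ — v r₂ … v s₁ — v q₂ … v r₁ — v p₂ … v q₁ — v s₂ … v n`,

into a path from `v 1` to `v n`, which the edge `v n v 1` closes into the required cycle.
-/

open SimpleGraph

lemma SimpleGraph.exists_walk_support_eq_map_range' {V : Type*} (G : SimpleGraph V)
    (v : ℕ → V) {a b : ℕ} (hab : a ≤ b)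
    (hadj : ∀ i, a ≤ i → i < b → G.Adj (v i) (v (i + 1))) :
    ∃ w : G.Walk (v a) (v b), w.support = (List.range' a (b + 1 - a)).map v := by
  induction b, hab using Nat.le_induction with
  | base => exact ⟨Walk.nil, by simp⟩
  | succ b hab ih =>
    obtain ⟨w, hw⟩ := ih fun i hi hib => hadj i hi (by omega)
    refine ⟨w.concat (hadj b hab (by omega)), ?_⟩
    rw [Walk.support_concat, hw, show b + 1 + 1 - a = (b + 1 - a) + 1 by omega,
      List.range'_1_concat, show a + (b + 1 - a) = b + 1 by omega, List.map_append]
    rfl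

lemma SimpleGraph.Walk.IsPath.cons_isCycle_of_two_le_length {V : Type*} {G : SimpleGraph V}
    {u v : V} {p : G.Walk v u} (hp : p.IsPath) (h : G.Adj u v) (hlen : 2 ≤ p.length) :
    (Walk.cons h p).IsCycle := by
  refine (Walk.cons_isCycle_iff p h).mpr ⟨hp, fun he => ?_⟩
  have := hp.length_eq_one_of_mem_edges (Sym2.eq_swap ▸ he)
  omega

namespace IsHamCycleList

variable {V : Type} [Fintype V] {G : SimpleGraph V} {n : ℕ} {v : ℕ → V}

lemma injOn (h : IsHamCycleList G n v) : Set.InjOn v (Set.Icc 1 n) := by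
  intro i ⟨hi, hin⟩ j ⟨hj, hjn⟩ hv
  rcases Nat.lt_trichotomy i j with hij | hij | hij
  · exact absurd hv (h.2.1 i j hi hij hjn)
  · exact hij
  · exact absurd hv.symm (h.2.1 j i hj hij hin)

lemma nodup_map (h : IsHamCycleList G n v) {I : List ℕ} (hI : ∀ i ∈ I, i ∈ Set.Icc 1 n)
    (hnd : I.Nodup) : (I.map v).Nodup :=
  hnd.map_on fun i hi j hj => h.injOn (hI i hi) (hI j hj)

lemma mem_map_iff (h : IsHamCycleList G n v) {I : List ℕ} {S : ℕ → Prop}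
    (hI : ∀ i, i ∈ I ↔ i ∈ Set.Icc 1 n ∧ ¬ S i) (hS : ∀ i, S i → i ∈ Set.Icc 1 n) (x : V) :
    x ∈ I.map v ↔ ¬ ∃ i, S i ∧ v i = x := by
  constructor
  · rintro hx ⟨i, hi, rfl⟩
    obtain ⟨j, hj, hji⟩ := List.mem_map.mp hx
    obtain ⟨hjn, hj⟩ := (hI j).1 hj
    exact hj (h.injOn hjn (hS i hi) hji ▸ hi)
  · intro hx
    obtain ⟨i, hi, hin, rfl⟩ := h.2.2.1 x
    exact List.mem_map_of_mem ((hI i).2 ⟨⟨hi, hin⟩, fun hS => hx ⟨i, hS, rfl⟩⟩)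

lemma exists_walk_support_eq_map_range' (h : IsHamCycleList G n v) {a b : ℕ} (ha : 1 ≤ a)
    (hab : a ≤ b) (hb : b ≤ n) :
    ∃ w : G.Walk (v a) (v b), w.support = (List.range' a (b + 1 - a)).map v :=
  G.exists_walk_support_eq_map_range' v hab fun i hi hib => h.2.2.2.1 i (by omega) (by omega)

end IsHamCycleList

/-- If `G` has Hamilton cycle `v 1, …, v n`,
`1 ≤ p₁ < p₂ < q₁ < q₂ < r₁ < r₂ < s₁ < s₂ ≤ n`, and `{v p₁, v r₂}`, `{v p₂, v r₁}`,
`{v q₁, v s₂}`, `{v q₂, v s₁}` are edges of `G`, then `G` has a cycle of length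
`n − (p₂−p₁−1) − (q₂−q₁−1) − (r₂−r₁−1) − (s₂−s₁−1)` whose vertex set consists of all
vertices except the `v i` with `p₁ < i < p₂`, `q₁ < i < q₂`, `r₁ < i < r₂` or
`s₁ < i < s₂`. -/
theorem statement14 {V : Type} [Fintype V] (G : SimpleGraph V) (n : ℕ) (v : ℕ → V)
    (hham : IsHamCycleList G n v) (p₁ p₂ q₁ q₂ r₁ r₂ s₁ s₂ : ℕ)
    (hp₁ : 1 ≤ p₁) (hp : p₁ < p₂) (hpq : p₂ < q₁) (hq : q₁ < q₂) (hqr : q₂ < r₁)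
    (hr : r₁ < r₂) (hrs : r₂ < s₁) (hs : s₁ < s₂) (hs₂ : s₂ ≤ n)
    (e₁ : G.Adj (v p₁) (v r₂)) (e₂ : G.Adj (v p₂) (v r₁))
    (e₃ : G.Adj (v q₁) (v s₂)) (e₄ : G.Adj (v q₂) (v s₁)) :
    ∃ (u : V) (w : G.Walk u u), w.IsCycle ∧
      w.length = n - (p₂ - p₁ - 1) - (q₂ - q₁ - 1) - (r₂ - r₁ - 1) - (s₂ - s₁ - 1) ∧
      ∀ x : V, x ∈ w.support ↔
        ¬ ∃ i : ℕ, ((p₁ < i ∧ i < p₂) ∨ (q₁ < i ∧ i < q₂) ∨ (r₁ < i ∧ i < r₂) ∨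
          (s₁ < i ∧ i < s₂)) ∧ v i = x := by
  obtain ⟨w₁, hw₁⟩ := hham.exists_walk_support_eq_map_range' le_rfl hp₁ (by omega)
  obtain ⟨w₂, hw₂⟩ := hham.exists_walk_support_eq_map_range' (by omega) hrs.le (by omega)
  obtain ⟨w₃, hw₃⟩ := hham.exists_walk_support_eq_map_range' (by omega) hqr.le (by omega)
  obtain ⟨w₄, hw₄⟩ := hham.exists_walk_support_eq_map_range' (by omega) hpq.le (by omega)
  obtain ⟨w₅, hw₅⟩ := hham.exists_walk_support_eq_map_range' (by omega) hs₂ le_rfl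
  let P : G.Walk (v 1) (v n) := w₁.append <| .cons e₁ <| w₂.append <| .cons e₄.symm <|
    w₃.append <| .cons e₂.symm <| w₄.append <| .cons e₃ w₅
  let I : List ℕ := List.range' 1 p₁ ++ List.range' r₂ (s₁ + 1 - r₂) ++
    List.range' q₂ (r₁ + 1 - q₂) ++ List.range' p₂ (q₁ + 1 - p₂) ++ List.range' s₂ (n + 1 - s₂)
  have hP : P.support = I.map v := by
    simp [P, I, Walk.support_append, hw₁, hw₂, hw₃, hw₄, hw₅]
  have hI : ∀ i, i ∈ I ↔ i ∈ Set.Icc 1 n ∧ ¬ ((p₁ < i ∧ i < p₂) ∨ (q₁ < i ∧ i < q₂) ∨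
      (r₁ < i ∧ i < r₂) ∨ (s₁ < i ∧ i < s₂)) := by
    intro i
    simp only [I, List.mem_append, List.mem_range'_1, Set.mem_Icc]
    omega
  have hInd : I.Nodup := by
    simp only [I, List.nodup_append, List.nodup_range' 1 Nat.one_pos, List.mem_append,
      List.mem_range'_1, true_and]
    refine ⟨⟨⟨?_, ?_⟩, ?_⟩, ?_⟩ <;> intros <;> omega
  have hPpath : P.IsPath := .mk' (hP ▸ hham.nodup_map (fun i hi => ((hI i).1 hi).1) hInd)
  have hPlen : P.length + 1 = I.length := by
    rw [← Walk.length_support, hP, List.length_map]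
  simp only [I, List.length_append, List.length_range'] at hPlen
  refine ⟨v n, .cons hham.2.2.2.2 P, hPpath.cons_isCycle_of_two_le_length _ (by omega),
    by rw [Walk.length_cons]; omega, fun x => ?_⟩
  rw [Walk.support_cons, List.mem_cons, or_iff_right_of_imp (· ▸ P.end_mem_support), hP]
  exact hham.mem_map_iff hI (fun i hi => by simp only [Set.mem_Icc]; omega) x
end

section
/- Let G be a graph on n vertices with Hamilton cycle v₁, v₂, …, v_n. Suppose 1 ≤ a₁ < a₂ < b₁ < b₂ < c₁ < c₂ ≤ n and {v_{a₁}, v_{b₁}}, {v_{a₂}, v_{c₁}}, {v_{b₂}, v_{c₂}} are edges of G. Then G contains a cycle of length n − (a₂−a₁−1) − (b₂−b₁−1) − (c₂−c₁−1) whose vertex set consists of all vertices of G except the vertices v_i with a₁ < i < a₂, with b₁ < i < b₂, or with c₁ < i < c₂. -/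
namespace SimpleGraph

variable {V : Type*} {G : SimpleGraph V}

theorem Walk.IsPath.isCycle_cons_of_one_lt_length {u w : V} {p : G.Walk u w} (hp : p.IsPath)
    (h : G.Adj w u) (hlen : 1 < p.length) : (cons h p).IsCycle :=
  (cons_isCycle_iff p h).2
    ⟨hp, fun he => hlen.ne' (hp.length_eq_one_of_mem_edges (Sym2.eq_swap ▸ he))⟩

theorem exists_walk_support_eq_map_range'_s15 (v : ℕ → V) {i j : ℕ} (hij : i ≤ j)
    (hadj : ∀ k, i ≤ k → k < j → G.Adj (v k) (v (k + 1))) :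
    ∃ p : G.Walk (v i) (v j), p.support = (List.range' i (j + 1 - i)).map v := by
  induction j, hij using Nat.le_induction with
  | base => exact ⟨Walk.nil, by simp⟩
  | succ j hij ih =>
    obtain ⟨p, hp⟩ := ih fun k hik hkj => hadj k hik (by omega)
    refine ⟨p.concat (hadj j hij j.lt_succ_self), ?_⟩
    rw [Walk.support_concat, hp, show j + 1 + 1 - i = j + 1 - i + 1 by omega, List.range'_concat,
      List.map_append, List.map_singleton, show i + 1 * (j + 1 - i) = j + 1 by omega]

end SimpleGraph

open SimpleGraph

theorem IsHamCycleList.injOn_s15 {V : Type} [Fintype V] {G : SimpleGraph V} {n : ℕ} {v : ℕ → V}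
    (h : IsHamCycleList G n v) : Set.InjOn v (Set.Icc 1 n) := by
  intro i ⟨hi, hin⟩ j ⟨hj, hjn⟩ hij
  by_contra hne
  rcases Nat.lt_or_gt_of_ne hne with hlt | hlt
  · exact h.2.1 i j hi hlt hjn hij
  · exact h.2.1 j i hj hlt hin hij.symm

theorem IsHamCycleList.exists_eq_iff_not_exists {V : Type} [Fintype V] {G : SimpleGraph V}
    {n : ℕ} {v : ℕ → V} (h : IsHamCycleList G n v) {P : ℕ → Prop}
    (hP : ∀ i, P i → 1 ≤ i ∧ i ≤ n) (x : V) :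
    (∃ i, (1 ≤ i ∧ i ≤ n ∧ ¬ P i) ∧ v i = x) ↔ ¬ ∃ i, P i ∧ v i = x := by
  constructor
  · rintro ⟨i, ⟨hi, hin, hPi⟩, rfl⟩ ⟨j, hPj, hji⟩
    exact hPi (h.injOn_s15 ⟨hi, hin⟩ (hP j hPj) hji.symm ▸ hPj)
  · intro hx
    obtain ⟨i, hi, hin, rfl⟩ := h.2.2.1 x
    exact ⟨i, ⟨hi, hin, fun hPi => hx ⟨i, hPi, rfl⟩⟩, rfl⟩

def semiTriangleCycleOrder (n a₁ a₂ b₁ b₂ c₁ c₂ : ℕ) : List ℕ :=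
  (List.range' a₂ (b₁ + 1 - a₂)).reverse ++ (List.range' b₂ (c₁ + 1 - b₂)).reverse ++
    List.range' c₂ (n + 1 - c₂) ++ List.range' 1 a₁

section semiTriangleCycleOrder

variable {n a₁ a₂ b₁ b₂ c₁ c₂ : ℕ}

theorem mem_semiTriangleCycleOrder (ha : a₁ < a₂) (hab : a₂ ≤ b₁) (hb : b₁ < b₂) (hbc : b₂ ≤ c₁)
    (hc : c₁ < c₂) (hc₂ : c₂ ≤ n) (i : ℕ) :
    i ∈ semiTriangleCycleOrder n a₁ a₂ b₁ b₂ c₁ c₂ ↔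
      1 ≤ i ∧ i ≤ n ∧ ¬ ((a₁ < i ∧ i < a₂) ∨ (b₁ < i ∧ i < b₂) ∨ (c₁ < i ∧ i < c₂)) := by
  simp only [semiTriangleCycleOrder, List.mem_append, List.mem_reverse, List.mem_range'_1]
  omega

theorem nodup_semiTriangleCycleOrder (ha : a₁ < a₂) (hab : a₂ ≤ b₁) (hb : b₁ < b₂) (hbc : b₂ ≤ c₁)
    (hc : c₁ < c₂) : (semiTriangleCycleOrder n a₁ a₂ b₁ b₂ c₁ c₂).Nodup := by
  simp only [semiTriangleCycleOrder, List.nodup_append, List.nodup_reverse, List.mem_append,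
    List.mem_reverse, List.mem_range'_1]
  and_intros <;> first | exact List.nodup_range' | (intros; omega)

theorem exists_walk_support_eq_semiTriangleCycleOrder {V : Type*} {G : SimpleGraph V}
    (v : ℕ → V) (hadj : ∀ i, 1 ≤ i → i < n → G.Adj (v i) (v (i + 1))) (hlast : G.Adj (v n) (v 1))
    (ha₁ : 1 ≤ a₁) (ha : a₁ ≤ a₂) (hab : a₂ ≤ b₁) (hb : b₁ ≤ b₂) (hbc : b₂ ≤ c₁) (hc : c₁ ≤ c₂)
    (hc₂ : c₂ ≤ n) (e₂ : G.Adj (v a₂) (v c₁)) (e₃ : G.Adj (v b₂) (v c₂)) :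
    ∃ p : G.Walk (v b₁) (v a₁), p.support = (semiTriangleCycleOrder n a₁ a₂ b₁ b₂ c₁ c₂).map v := by
  have hseg : ∀ i j, 1 ≤ i → i ≤ j → j ≤ n →
      ∃ p : G.Walk (v i) (v j), p.support = (List.range' i (j + 1 - i)).map v :=
    fun i j hi hij hjn => exists_walk_support_eq_map_range'_s15 v hij
      fun k hik hkj => hadj k (by omega) (by omega)
  obtain ⟨p₁, hp₁⟩ := hseg a₂ b₁ (by omega) hab (by omega)
  obtain ⟨p₂, hp₂⟩ := hseg b₂ c₁ (by omega) hbc (by omega)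
  obtain ⟨p₃, hp₃⟩ := hseg c₂ n (by omega) hc₂ le_rfl
  obtain ⟨p₄, hp₄⟩ := hseg 1 a₁ le_rfl ha₁ (by omega)
  refine ⟨p₁.reverse.append (.cons e₂ (p₂.reverse.append (.cons e₃ (p₃.append (.cons hlast p₄))))),
    ?_⟩
  simp [Walk.support_append, Walk.support_reverse, hp₁, hp₂, hp₃, hp₄, semiTriangleCycleOrder]

end semiTriangleCycleOrder

/-- If `G` has Hamilton cycle `v 1, …, v n`,
`1 ≤ a₁ < a₂ < b₁ < b₂ < c₁ < c₂ ≤ n`, and `{v a₁, v b₁}`, `{v a₂, v c₁}`, `{v b₂, v c₂}`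
are edges of `G` (the chord configuration of a Type 2 semi-triangle), then `G` has a cycle
of length `n − (a₂−a₁−1) − (b₂−b₁−1) − (c₂−c₁−1)` whose vertex set consists of all
vertices except the `v i` with `a₁ < i < a₂`, `b₁ < i < b₂` or `c₁ < i < c₂`. -/
theorem statement15 {V : Type} [Fintype V] (G : SimpleGraph V) (n : ℕ) (v : ℕ → V)
    (hham : IsHamCycleList G n v) (a₁ a₂ b₁ b₂ c₁ c₂ : ℕ)
    (ha₁ : 1 ≤ a₁) (ha : a₁ < a₂) (hab : a₂ < b₁) (hb : b₁ < b₂) (hbc : b₂ < c₁)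
    (hc : c₁ < c₂) (hc₂ : c₂ ≤ n)
    (e₁ : G.Adj (v a₁) (v b₁)) (e₂ : G.Adj (v a₂) (v c₁)) (e₃ : G.Adj (v b₂) (v c₂)) :
    ∃ (u : V) (w : G.Walk u u), w.IsCycle ∧
      w.length = n - (a₂ - a₁ - 1) - (b₂ - b₁ - 1) - (c₂ - c₁ - 1) ∧
      ∀ x : V, x ∈ w.support ↔
        ¬ ∃ i : ℕ, ((a₁ < i ∧ i < a₂) ∨ (b₁ < i ∧ i < b₂) ∨ (c₁ < i ∧ i < c₂)) ∧
          v i = x := by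
  obtain ⟨p, hp⟩ := exists_walk_support_eq_semiTriangleCycleOrder v hham.2.2.2.1 hham.2.2.2.2
    ha₁ ha.le hab.le hb.le hbc.le hc.le hc₂ e₂ e₃
  have hmem := mem_semiTriangleCycleOrder ha hab.le hb hbc.le hc hc₂
  have hIcc : ∀ i ∈ semiTriangleCycleOrder n a₁ a₂ b₁ b₂ c₁ c₂, i ∈ Set.Icc 1 n :=
    fun i hi => ⟨((hmem i).1 hi).1, ((hmem i).1 hi).2.1⟩
  have hpath : p.IsPath := .mk' <| hp ▸ (nodup_semiTriangleCycleOrder ha hab.le hb hbc.le hc).map_on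
    fun i hi j hj => hham.injOn_s15 (hIcc i hi) (hIcc j hj)
  have hlen : p.length + 1 = a₁ + (b₁ + 1 - a₂) + (c₁ + 1 - b₂) + (n + 1 - c₂) := by
    rw [← Walk.length_support, hp]
    simp only [semiTriangleCycleOrder, List.length_map, List.length_append, List.length_reverse,
      List.length_range']
    omega
  refine ⟨v a₁, .cons e₁ p, hpath.isCycle_cons_of_one_lt_length e₁ (by omega),
    by rw [Walk.length_cons]; omega, fun x => ?_⟩
  rw [← hham.exists_eq_iff_not_exists (fun i _ => by omega), Walk.support_cons, List.mem_cons,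
    or_iff_right_of_imp (· ▸ p.end_mem_support), hp, List.mem_map]
  simp only [hmem]
end

section
/- Let X be a finite set, let c > 0 be a real number, and let f be a real-valued submodular function on the subsets of X, i.e., f(S) + f(T) ≥ f(S ∪ T) + f(S ∩ T) for all S, T ⊆ X. Assume that f(Y) ≥ c·|Y| for every Y ⊆ X. If T₁, …, T_i are subsets of X with f(T_j) < (|T_j| + 1)·c for every 1 ≤ j ≤ i, then f(T₁ ∪ ⋯ ∪ T_i) ≤ (|T₁ ∪ ⋯ ∪ T_i| + i)·c. -/
open Finset

/-- Let `f` be a submodular real-valued function on the subsets of a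
finite set `X` with `f(Y) ≥ c·|Y|` for every `Y ⊆ X` (`c > 0`). If `T 1, …, T i` are
subsets of `X` that are tight, i.e. `f(T j) < (|T j| + 1)·c`, then
`f(T 1 ∪ ⋯ ∪ T i) ≤ (|T 1 ∪ ⋯ ∪ T i| + i)·c`. -/
theorem statement16 {α : Type} [DecidableEq α] (X : Finset α) (c : ℝ) (hc : 0 < c)
    (f : Finset α → ℝ)
    (hsub : ∀ S T : Finset α, S ⊆ X → T ⊆ X → f S + f T ≥ f (S ∪ T) + f (S ∩ T))
    (hexp : ∀ Y : Finset α, Y ⊆ X → f Y ≥ c * Y.card)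
    (i : ℕ) (hi : 1 ≤ i) (T : ℕ → Finset α)
    (hT : ∀ j : ℕ, 1 ≤ j → j ≤ i → T j ⊆ X)
    (htight : ∀ j : ℕ, 1 ≤ j → j ≤ i → f (T j) < ((T j).card + 1) * c) :
    f ((Finset.Icc 1 i).biUnion T) ≤ ((((Finset.Icc 1 i).biUnion T).card : ℝ) + i) * c := by
  induction i with
  | zero => omega
  | succ n ih =>
    have hIcc : Finset.Icc 1 (n + 1) = insert (n + 1) (Finset.Icc 1 n) := by
      ext x; simp [Finset.mem_Icc]; omega
    rcases Nat.eq_zero_or_pos n with hn | hn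
    · subst hn
      have h1 : (Finset.Icc 1 1).biUnion T = T 1 := by
        rw [Finset.Icc_self, Finset.singleton_biUnion]
      rw [h1]
      have := htight 1 le_rfl le_rfl
      push_cast
      linarith
    · -- n ≥ 1
      have hUsub : (Finset.Icc 1 n).biUnion T ⊆ X := by
        intro x hx
        simp only [Finset.mem_biUnion, Finset.mem_Icc] at hx
        obtain ⟨j, ⟨h1, h2⟩, hx⟩ := hx
        exact hT j h1 (by omega) hx
      have hVsub : T (n + 1) ⊆ X := hT (n + 1) (by omega) le_rfl
      have ihU : f ((Finset.Icc 1 n).biUnion T) ≤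
          ((((Finset.Icc 1 n).biUnion T).card : ℝ) + n) * c :=
        ih hn (fun j h1 h2 => hT j h1 (by omega)) (fun j h1 h2 => htight j h1 (by omega))
      set U := (Finset.Icc 1 n).biUnion T with hU
      set V := T (n + 1) with hV
      have hbi : (Finset.Icc 1 (n + 1)).biUnion T = U ∪ V := by
        rw [hIcc, Finset.biUnion_insert, Finset.union_comm]
      rw [hbi]
      have hsm := hsub U V hUsub hVsub
      have hint : f (U ∩ V) ≥ c * (U ∩ V).card :=
        hexp _ (fun x hx => hUsub (Finset.mem_of_mem_inter_left hx))
      have htV := htight (n + 1) (by omega) le_rfl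
      have hcard : ((U ∪ V).card : ℝ) = (U.card : ℝ) + V.card - (U ∩ V).card := by
        have := Finset.card_union_add_card_inter U V
        have : ((U ∪ V).card : ℝ) + (U ∩ V).card = (U.card : ℝ) + V.card := by
          exact_mod_cast congrArg (Nat.cast : ℕ → ℝ) this
        linarith
      push_cast
      rw [hcard]
      have : f (U ∪ V) ≤ f U + f V - f (U ∩ V) := by linarith
      nlinarith [hint, ihU, htV]
end

section
/- For every integer k ≥ 5 there exists a graph G on k(k−2) vertices such that G is Hamiltonian, the independence number of G is exactly k, and G contains no cycle of length k−1. (Such a graph is obtained from k pairwise disjoint cliques K₁, …, K_k, each on k−2 vertices, by adding one edge between K_i and K_{i+1} for each i, indices modulo k, so that these k added edges are pairwise vertex-disjoint.) -/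
/-!
Take the vertices `ZMod k × ZMod m`, the clique `c` being `{c} × ZMod m`, and join clique `c` to
clique `c + 1` by the edge `(c, 1) — (c + 1, 0)`. Walking through each clique in the order
`0, -1, …, 1` and then along the link gives a Hamilton cycle, and an independent set has at most
one vertex per clique, while `{(c, 2)}` is independent. The edge boundary of a clique consists of
its two links, and a cycle crosses every edge cut an even number of times; so a cycle through one
link passes through all `k` of them and has length at least `k`, and otherwise it stays inside one
clique and has length at most `m`. With `m = k - 2`, no cycle has length `k - 1`.
-/

open Function

namespace SimpleGraph

variable {V : Type*} {G : SimpleGraph V}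

/-- A cycle through an edge `s(a, b)` that leaves `S` must leave `S` a second time: deleting
`s(a, b)` leaves a walk from `a` back to `b`. -/
theorem Walk.IsCycle.mem_edges_of_boundary {u a b : V} {e : Sym2 V} {S : Set V}
    {w : G.Walk u u} (hw : w.IsCycle) (ha : a ∈ S) (hb : b ∉ S) (hab : s(a, b) ∈ w.edges)
    (hS : ∀ x y, G.Adj x y → x ∈ S → y ∉ S → s(x, y) = s(a, b) ∨ s(x, y) = e) :
    e ∈ w.edges := by
  by_contra he
  set H := G.deleteEdges {e}
  have hwH : ∀ f ∈ w.edges, f ∈ H.edgeSet := fun f hf => by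
    rw [edgeSet_deleteEdges]
    exact ⟨w.edges_subset_edgeSet hf, fun hfe => he (hfe ▸ hf)⟩
  obtain ⟨-, ⟨p⟩⟩ := H.adj_and_reachable_delete_edges_iff_exists_cycle.mpr
    ⟨u, _, hw.transfer hwH, by rwa [Walk.edges_transfer]⟩
  obtain ⟨d, -, hdS, hdS'⟩ := p.exists_boundary_dart S ha hb
  have hd := d.adj
  simp only [deleteEdges_adj, H, Set.mem_singleton_iff] at hd
  rcases hS _ _ hd.1.1 hdS hdS' with h | h
  · exact hd.2 h
  · exact hd.1.2 h

theorem IsHamiltonian.of_hom_cycleGraph [Fintype V] [DecidableEq V] {n : ℕ}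
    (f : cycleGraph (n + 3) →g G) (hf : Bijective f) : G.IsHamiltonian := fun _ =>
  ⟨f 0, (cycleGraph.cycle n).map f, (Walk.isHamiltonianCycle_iff_isCycle_and_length_eq.mpr
    ⟨cycleGraph.isCycle_cycle, by simp⟩).map hf⟩

variable {k m : ℕ}

def cliqueRing.link (c : ZMod k) : Sym2 (ZMod k × ZMod m) := s((c, 1), (c + 1, 0))

def cliqueRing (k m : ℕ) : SimpleGraph (ZMod k × ZMod m) :=
  boxProd (⊥ : SimpleGraph (ZMod k)) (⊤ : SimpleGraph (ZMod m)) ⊔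
    fromEdgeSet (Set.range cliqueRing.link)

namespace cliqueRing

theorem adj_of_fst_eq {x y : ZMod k × ZMod m} (h : x.1 = y.1) (hne : x ≠ y) :
    (cliqueRing k m).Adj x y :=
  Or.inl (boxProd_adj.mpr (Or.inr ⟨fun h2 => hne (Prod.ext h h2), h⟩))

theorem adj_link [Fact (1 < m)] (c : ZMod k) : (cliqueRing k m).Adj (c, 1) (c + 1, 0) :=
  Or.inr ⟨⟨c, rfl⟩, fun h => one_ne_zero (congrArg Prod.snd h)⟩

theorem exists_link_of_adj {x y : ZMod k × ZMod m} (h : (cliqueRing k m).Adj x y)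
    (hne : x.1 ≠ y.1) : ∃ c, link c = s(x, y) := by
  rcases h with h | ⟨h, -⟩
  · simp only [boxProd_adj, bot_adj, false_and, false_or] at h
    exact absurd h.2 hne
  · exact h

theorem link_injective [Fact (1 < m)] : Injective (link : ZMod k → Sym2 (ZMod k × ZMod m)) := by
  intro c c' h
  rcases Sym2.eq_iff.mp h with h | h
  · exact congrArg Prod.fst h.1
  · exact absurd (congrArg Prod.snd h.1) one_ne_zero

theorem link_add_one_mem_edges [Fact (1 < k)] {u : ZMod k × ZMod m}
    {w : (cliqueRing k m).Walk u u} (hw : w.IsCycle) {c : ZMod k} (hc : link c ∈ w.edges) :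
    link (c + 1) ∈ w.edges := by
  refine hw.mem_edges_of_boundary (S := {x | x.1 = c + 1}) (a := (c + 1, 0)) (b := (c, 1))
    rfl (fun h => one_ne_zero (left_eq_add.mp h)) (Sym2.eq_swap ▸ hc) ?_
  intro x y hxy hx hy
  obtain ⟨c', hc'⟩ := exists_link_of_adj hxy (hx.trans_ne (Ne.symm hy))
  rcases Sym2.eq_iff.mp hc' with ⟨rfl, rfl⟩ | ⟨rfl, rfl⟩
  · exact Or.inr (by rw [← hx]; rfl)
  · obtain rfl : c' = c := add_right_cancel hx
    exact Or.inl rfl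

theorem link_mem_edges [Fact (1 < k)] {u : ZMod k × ZMod m}
    {w : (cliqueRing k m).Walk u u} (hw : w.IsCycle) {c : ZMod k} (hc : link c ∈ w.edges)
    (c' : ZMod k) : link c' ∈ w.edges := by
  have key : ∀ n : ℕ, link (c + (n : ZMod k)) ∈ w.edges := by
    intro n
    induction n with
    | zero => simpa using hc
    | succ n ih => simpa [← add_assoc] using link_add_one_mem_edges hw ih
  simpa using key (c' - c).val

theorem fst_eq_of_forall_link_notMem {u v : ZMod k × ZMod m} (p : (cliqueRing k m).Walk u v)
    (hp : ∀ c, link c ∉ p.edges) : v.1 = u.1 := by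
  by_contra hv
  obtain ⟨d, hd, hdu, hdv⟩ := p.exists_boundary_dart {x | x.1 = u.1} rfl hv
  obtain ⟨c, hc⟩ := exists_link_of_adj d.adj (hdu.trans_ne (Ne.symm hdv))
  exact hp c (hc ▸ List.mem_map_of_mem hd)

theorem length_le_or_le_length_of_isCycle [Fact (1 < k)] [Fact (1 < m)]
    {u : ZMod k × ZMod m} {w : (cliqueRing k m).Walk u u} (hw : w.IsCycle) :
    w.length ≤ m ∨ k ≤ w.length := by
  classical
  by_cases h : ∃ c, link c ∈ w.edges
  · obtain ⟨c, hc⟩ := h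
    right
    calc k = (Finset.univ : Finset (ZMod k)).card := by simp [ZMod.card]
      _ ≤ w.edges.toFinset.card := Finset.card_le_card_of_injOn link
          (fun c' _ => List.mem_toFinset.mpr (link_mem_edges hw hc c'))
          link_injective.injOn
      _ ≤ w.edges.length := w.edges.toFinset_card_le
      _ = w.length := w.length_edges
  · simp only [not_exists] at h
    left
    have hclique : ∀ x ∈ w.support, x.1 = u.1 := fun x hx =>
      fst_eq_of_forall_link_notMem (w.takeUntil x hx)
        fun c hc => h c (w.edges_takeUntil_subset_edges hx hc)
    have hnodup : (w.support.tail.map Prod.snd).Nodup :=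
      hw.support_nodup.map_on fun x hx y hy hxy =>
        Prod.ext ((hclique x (List.mem_of_mem_tail hx)).trans
          (hclique y (List.mem_of_mem_tail hy)).symm) hxy
    calc w.length = (w.support.tail.map Prod.snd).length := by simp
      _ ≤ m := by simpa [ZMod.card] using hnodup.length_le_card

theorem card_le_of_isIndepSet [NeZero k] {s : Finset (ZMod k × ZMod m)}
    (hs : (cliqueRing k m).IsIndepSet s) : s.card ≤ k := by
  calc s.card ≤ (Finset.univ : Finset (ZMod k)).card :=
        Finset.card_le_card_of_injOn Prod.fst (fun _ _ => Finset.mem_coe.mpr (Finset.mem_univ _))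
          fun x hx y hy hxy => by_contra fun hne => hs hx hy hne (adj_of_fst_eq hxy hne)
    _ = k := by simp [ZMod.card]

theorem exists_isIndepSet_card_eq [NeZero k] (hm : 3 ≤ m) :
    ∃ s : Finset (ZMod k × ZMod m), (cliqueRing k m).IsIndepSet s ∧ s.card = k := by
  have one_ne_two : (1 : ZMod m) ≠ 2 := fun h => by
    have := (ZMod.natCast_eq_natCast_iff' 1 2 m).mp (by exact_mod_cast h)
    rw [Nat.mod_eq_of_lt (by omega), Nat.mod_eq_of_lt (by omega)] at this
    omega
  refine ⟨Finset.univ.image fun c => (c, 2), ?_, by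
    rw [Finset.card_image_of_injective _ fun c c' h => congrArg Prod.fst h]
    simp [ZMod.card]⟩
  rintro _ hx _ hy hne hadj
  obtain ⟨c, -, rfl⟩ := Finset.mem_image.mp hx
  obtain ⟨c', -, rfl⟩ := Finset.mem_image.mp hy
  rcases hadj with h | ⟨⟨c'', hc⟩, -⟩
  · simp [boxProd_adj] at h
  · rcases Sym2.eq_iff.mp hc with ⟨h, -⟩ | ⟨h, -⟩ <;>
      exact one_ne_two (congrArg Prod.snd h)

/-- Clique `t / m` is traversed as `0, -1, …, -(m - 1) = 1`, so it is entered at `0` and left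
along its link at `1`. -/
def hamiltonVertex (k m t : ℕ) : ZMod k × ZMod m := ((t / m : ℕ), -(t : ZMod m))

theorem hamiltonVertex_mod (t : ℕ) :
    hamiltonVertex k m (t % (k * m)) = hamiltonVertex k m t := by
  rw [hamiltonVertex, hamiltonVertex, Nat.mod_mul_left_div_self, ZMod.natCast_mod,
    ← ZMod.natCast_mod (t % (k * m)), Nat.mod_mul_left_mod, ZMod.natCast_mod]

theorem adj_hamiltonVertex_succ [Fact (1 < m)] (t : ℕ) :
    (cliqueRing k m).Adj (hamiltonVertex k m t) (hamiltonVertex k m (t + 1)) := by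
  rw [hamiltonVertex, hamiltonVertex, Nat.succ_div]
  split_ifs with h
  · have h0 : (t : ZMod m) + 1 = 0 := by exact_mod_cast (ZMod.natCast_eq_zero_iff _ _).mpr h
    rw [Nat.cast_add, Nat.cast_one, Nat.cast_add, Nat.cast_one, h0, neg_zero,
      neg_eq_of_add_eq_zero_right h0]
    exact adj_link _
  · refine adj_of_fst_eq (by simp) fun h' => one_ne_zero (α := ZMod m) ?_
    have := congrArg Prod.snd h'
    simp only [Nat.cast_add, Nat.cast_one, neg_add_rev] at this
    linear_combination this

theorem hamiltonVertex_injOn [NeZero m] :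
    Set.InjOn (hamiltonVertex k m) (Set.Iio (k * m)) := by
  intro a ha b hb h
  have hm : 0 < m := Nat.pos_of_neZero m
  have hdiv : a / m = b / m := by
    have := (ZMod.natCast_eq_natCast_iff' _ _ _).mp (congrArg Prod.fst h)
    rwa [Nat.mod_eq_of_lt ((Nat.div_lt_iff_lt_mul hm).mpr ha),
      Nat.mod_eq_of_lt ((Nat.div_lt_iff_lt_mul hm).mpr hb)] at this
  have hmod : a % m = b % m :=
    (ZMod.natCast_eq_natCast_iff' _ _ _).mp (neg_inj.mp (congrArg Prod.snd h))
  rw [← Nat.div_add_mod a m, ← Nat.div_add_mod b m, hdiv, hmod]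

theorem isHamiltonian [Fact (1 < k)] [Fact (1 < m)] : (cliqueRing k m).IsHamiltonian := by
  have hkm : 4 ≤ k * m := Nat.mul_le_mul (Fact.out : 1 < k) (Fact.out : 1 < m)
  obtain ⟨n, hn⟩ : ∃ n, k * m = n + 3 := ⟨k * m - 3, by omega⟩
  have hsucc (s : Fin (n + 3)) :
      (cliqueRing k m).Adj (hamiltonVertex k m s) (hamiltonVertex k m ↑(s + 1)) := by
    have hmod := hamiltonVertex_mod (k := k) (m := m) (s + 1)
    rw [hn] at hmod
    rw [Fin.val_add, Fin.val_one, hmod]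
    exact adj_hamiltonVertex_succ s
  let f : cycleGraph (n + 3) →g cliqueRing k m :=
    { toFun := fun t => hamiltonVertex k m t
      map_rel' := fun {s t} hst => by
        rcases cycleGraph_adj.mp hst with h | h
        · obtain rfl := sub_eq_iff_eq_add'.mp h
          exact (hsucc t).symm
        · obtain rfl := sub_eq_iff_eq_add'.mp h
          exact hsucc s }
  refine IsHamiltonian.of_hom_cycleGraph f ((Fintype.bijective_iff_injective_and_card f).mpr
    ⟨fun s t h => Fin.ext (hamiltonVertex_injOn (by simp [hn]) (by simp [hn]) h), ?_⟩)
  simp [ZMod.card, hn]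

end cliqueRing

end SimpleGraph

/-- For every integer `k ≥ 5` there is a graph `G` on `k(k − 2)` vertices
that is Hamiltonian, has independence number exactly `k`, and contains no cycle of length
`k − 1`. -/
theorem statement18 (k : ℕ) (hk : 5 ≤ k) :
    ∃ (V : Type) (_ : Fintype V) (_ : DecidableEq V) (G : SimpleGraph V),
      Fintype.card V = k * (k - 2) ∧
      G.IsHamiltonian ∧
      IsGreatest {m : ℕ | ∃ s : Finset V,
        (∀ u ∈ s, ∀ v ∈ s, u ≠ v → ¬ G.Adj u v) ∧ s.card = m} k ∧
      ¬ ∃ (u : V) (w : G.Walk u u), w.IsCycle ∧ w.length = k - 1 := by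
  have : Fact (1 < k) := ⟨by omega⟩
  have : Fact (1 < k - 2) := ⟨by omega⟩
  refine ⟨ZMod k × ZMod (k - 2), inferInstance, inferInstance, SimpleGraph.cliqueRing k (k - 2),
    by simp [ZMod.card], SimpleGraph.cliqueRing.isHamiltonian, ?_, ?_⟩
  · obtain ⟨s, hs, hcard⟩ :=
      SimpleGraph.cliqueRing.exists_isIndepSet_card_eq (k := k) (m := k - 2) (by omega)
    exact ⟨⟨s, hs, hcard⟩, fun _ ⟨t, ht, htcard⟩ =>
      htcard ▸ SimpleGraph.cliqueRing.card_le_of_isIndepSet ht⟩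
  · rintro ⟨u, w, hw, hlen⟩
    have := SimpleGraph.cliqueRing.length_le_or_le_length_of_isCycle hw
    omega
end
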